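/- arXiv:1305.6973 — 9 statements merged into one kernel-verified Lean document; each statement's English description precedes it below -/
import Mathlib

section
/- Let P = F₂^{2n} carry the standard non-degenerate symplectic form, let the n coordinates be partitioned into two disjoint sets A and B, and for a subspace G ≤ P let G_A = G ∩ P_A denote the subspace of G supported on A (similarly G_B). Then there exists a subspace G' ≤ G with G = G_A ⊕ G_B ⊕ G', and the orthogonal complement satisfies dim_{F₂}((G^⊥)_A) = 2|A| − dim G_A − dim G' and dim_{F₂}((G^⊥)_B) = 2|B| − dim G_B − dim G'. -/
/-- The `n`-qubit Pauli space `P = F₂ⁿ × F₂ⁿ`. -/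
abbrev PauliSpace (n : ℕ) := (Fin n → ZMod 2) × (Fin n → ZMod 2)

/-- The standard symplectic form `λ((a,b),(c,d)) = a·d + b·c` on `PauliSpace n`. -/
def sympForm {n : ℕ} (p q : PauliSpace n) : ZMod 2 :=
  dotProduct p.1 q.2 + dotProduct p.2 q.1

/-- The orthogonal complement `G^⊥ = {x : λ(x,g) = 0 for all g ∈ G}`. -/
def sympOrtho {n : ℕ} (G : Submodule (ZMod 2) (PauliSpace n)) :
    Submodule (ZMod 2) (PauliSpace n) where
  carrier := {x | ∀ g ∈ G, sympForm x g = 0}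
  add_mem' := by
    intro a b ha hb g hg
    have h : sympForm (a + b) g = sympForm a g + sympForm b g := by
      simp only [sympForm, Prod.fst_add, Prod.snd_add, add_dotProduct]
      ring
    rw [h, ha g hg, hb g hg, add_zero]
  zero_mem' := by
    intro g hg
    simp [sympForm]
  smul_mem' := by
    intro c a ha g hg
    have h : sympForm (c • a) g = c * sympForm a g := by
      simp only [sympForm, Prod.smul_fst, Prod.smul_snd, smul_dotProduct,
        smul_eq_mul]
      ring
    rw [h, ha g hg, mul_zero]

/-- `P_A`: the subspace of Pauli vectors supported on the coordinate set `A`. -/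
def suppIn {n : ℕ} (A : Finset (Fin n)) : Submodule (ZMod 2) (PauliSpace n) where
  carrier := {p | ∀ i, i ∉ A → p.1 i = 0 ∧ p.2 i = 0}
  add_mem' := by
    intro a b ha hb i hi
    obtain ⟨h1, h2⟩ := ha i hi
    obtain ⟨h3, h4⟩ := hb i hi
    constructor <;> simp [h1, h2, h3, h4]
  zero_mem' := by intro i _; simp
  smul_mem' := by
    intro c a ha i hi
    obtain ⟨h1, h2⟩ := ha i hi
    constructor <;> simp [h1, h2]

/-!
Write `G_S = G ⊓ P_S`. Since `P_B^⊥ = P_A`, we have `(G^⊥)_A = (G + P_B)^⊥`, so non-degeneracy of `λ`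
gives `dim (G^⊥)_A = 2n − dim (G + P_B) = 2n − dim G − 2|B| + dim G_B = 2|A| − dim G + dim G_B`.
Taking `G'` a complement of `G_A ⊕ G_B` inside `G`, `dim G = dim G_A + dim G_B + dim G'`,
which gives the formula for `A`; the one for `B` is symmetric.
-/

open Module Finset

theorem Submodule.finrank_sup_of_disjoint {K V : Type*} [DivisionRing K] [AddCommGroup V]
    [Module K V] [FiniteDimensional K V] {s t : Submodule K V} (h : Disjoint s t) :
    finrank K ↥(s ⊔ t) = finrank K s + finrank K t := by
  rw [← Submodule.finrank_sup_add_finrank_inf_eq, h.eq_bot, finrank_bot, add_zero]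

section

variable {n : ℕ}

lemma sympForm_comm (p q : PauliSpace n) : sympForm p q = sympForm q p := by
  simp only [sympForm, dotProduct_comm p.1, dotProduct_comm p.2, add_comm]

@[simp]
lemma sympForm_single_snd (x : PauliSpace n) (i : Fin n) :
    sympForm x (0, Pi.single i 1) = x.1 i := by
  simp [sympForm, dotProduct_single]

@[simp]
lemma sympForm_single_fst (x : PauliSpace n) (i : Fin n) :
    sympForm x (Pi.single i 1, 0) = x.2 i := by
  simp [sympForm, dotProduct_single]

variable (n) in
noncomputable def sympBilin : LinearMap.BilinForm (ZMod 2) (PauliSpace n) :=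
  LinearMap.mk₂ (ZMod 2) sympForm
    (by intro a b c; simp only [sympForm, Prod.fst_add, Prod.snd_add, add_dotProduct]; ring)
    (by intro a b c; simp only [sympForm, Prod.smul_fst, Prod.smul_snd, smul_dotProduct,
      smul_eq_mul]; ring)
    (by intro a b c; simp only [sympForm, Prod.fst_add, Prod.snd_add, dotProduct_add]; ring)
    (by intro a b c; simp only [sympForm, Prod.smul_fst, Prod.smul_snd, dotProduct_smul,
      smul_eq_mul]; ring)

@[simp]
lemma sympBilin_apply (p q : PauliSpace n) : sympBilin n p q = sympForm p q := rfl

lemma sympBilin_isRefl : (sympBilin n).IsRefl := fun x y h => by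
  rwa [sympBilin_apply, sympForm_comm] at h

lemma sympBilin_nondegenerate : (sympBilin n).Nondegenerate := by
  refine sympBilin_isRefl.nondegenerate_iff_separatingLeft.mpr fun x hx => ?_
  ext i
  · simpa using hx (0, Pi.single i 1)
  · simpa using hx (Pi.single i 1, 0)

lemma sympOrtho_eq_orthogonal (G : Submodule (ZMod 2) (PauliSpace n)) :
    sympOrtho G = (sympBilin n).orthogonal G := by
  ext x
  exact forall₂_congr fun g _ => by rw [sympBilin_apply, sympForm_comm]

lemma finrank_sympOrtho_add_finrank (G : Submodule (ZMod 2) (PauliSpace n)) :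
    finrank (ZMod 2) (sympOrtho G) + finrank (ZMod 2) G = 2 * n := by
  have hG : finrank (ZMod 2) G ≤ 2 * n := by
    simpa [two_mul] using Submodule.finrank_le G
  rw [sympOrtho_eq_orthogonal, LinearMap.BilinForm.finrank_orthogonal sympBilin_nondegenerate]
  simp only [finrank_prod, finrank_fin_fun]
  omega

lemma sympOrtho_sup (G H : Submodule (ZMod 2) (PauliSpace n)) :
    sympOrtho (G ⊔ H) = sympOrtho G ⊓ sympOrtho H := by
  refine le_antisymm (le_inf (fun x hx g hg => hx g (Submodule.mem_sup_left hg))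
    (fun x hx h hh => hx h (Submodule.mem_sup_right hh))) ?_
  rintro x ⟨hxG, hxH⟩ _ hgh
  obtain ⟨g, hg, h, hh, rfl⟩ := Submodule.mem_sup.mp hgh
  rw [← sympBilin_apply, map_add, sympBilin_apply, sympBilin_apply, hxG g hg, hxH h hh, add_zero]

lemma sympOrtho_suppIn (S : Finset (Fin n)) : sympOrtho (suppIn S) = suppIn Sᶜ := by
  apply le_antisymm
  · intro x hx i hi
    have hiS : i ∈ S := by simpa using hi
    constructor
    · simpa using hx (0, Pi.single i 1) fun j hj =>
        ⟨rfl, Pi.single_eq_of_ne (by rintro rfl; exact hj hiS) 1⟩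
    · simpa using hx (Pi.single i 1, 0) fun j hj =>
        ⟨Pi.single_eq_of_ne (by rintro rfl; exact hj hiS) 1, rfl⟩
  · intro x hx g hg
    have hvanish : ∀ j, (x.1 j = 0 ∧ x.2 j = 0) ∨ (g.1 j = 0 ∧ g.2 j = 0) := fun j => by
      by_cases hj : j ∈ S
      · exact Or.inl (hx j (by simpa using hj))
      · exact Or.inr (hg j hj)
    simp only [sympForm, dotProduct]
    rw [Finset.sum_eq_zero, Finset.sum_eq_zero, add_zero] <;>
    · intro j _
      rcases hvanish j with ⟨h1, h2⟩ | ⟨h1, h2⟩ <;> simp [h1, h2]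

lemma disjoint_suppIn {S T : Finset (Fin n)} (h : Disjoint S T) :
    Disjoint (suppIn S) (suppIn T) := by
  rw [Submodule.disjoint_def]
  intro x hxS hxT
  have hzero : ∀ i, x.1 i = 0 ∧ x.2 i = 0 := fun i => by
    by_cases hi : i ∈ S
    · exact hxT i (Finset.disjoint_left.mp h hi)
    · exact hxS i hi
  exact Prod.ext (funext fun i => (hzero i).1) (funext fun i => (hzero i).2)

noncomputable def suppInEquiv (S : Finset (Fin n)) :
    suppIn S ≃ₗ[ZMod 2] (S → ZMod 2) × (S → ZMod 2) where
  toFun p := (fun i => p.1.1 i, fun i => p.1.2 i)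
  map_add' _ _ := rfl
  map_smul' _ _ := rfl
  invFun q := ⟨(fun i => if h : i ∈ S then q.1 ⟨i, h⟩ else 0,
    fun i => if h : i ∈ S then q.2 ⟨i, h⟩ else 0), fun i hi => by simp [hi]⟩
  left_inv := by
    rintro ⟨⟨a, b⟩, hp⟩
    ext i <;> by_cases h : i ∈ S <;> simp only [h, dite_true, dite_false]
    · exact (hp i h).1.symm
    · exact (hp i h).2.symm
  right_inv := by
    rintro ⟨q1, q2⟩
    ext i <;> simp [i.2]

lemma finrank_suppIn (S : Finset (Fin n)) :
    finrank (ZMod 2) (suppIn S) = 2 * #S := by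
  simp only [(suppInEquiv S).finrank_eq, finrank_prod, finrank_fintype_fun_eq_card,
    Fintype.card_coe, two_mul]

lemma finrank_sympOrtho_inf_suppIn_add_finrank (G : Submodule (ZMod 2) (PauliSpace n))
    (S : Finset (Fin n)) :
    finrank (ZMod 2) ↥(sympOrtho G ⊓ suppIn S) + finrank (ZMod 2) G
      = 2 * #S + finrank (ZMod 2) ↥(G ⊓ suppIn Sᶜ) := by
  have hortho : sympOrtho G ⊓ suppIn S = sympOrtho (G ⊔ suppIn Sᶜ) := by
    rw [sympOrtho_sup, sympOrtho_suppIn, compl_compl]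
  have hdim := finrank_sympOrtho_add_finrank (G ⊔ suppIn Sᶜ)
  have hsup := Submodule.finrank_sup_add_finrank_inf_eq G (suppIn Sᶜ)
  have hcard : #Sᶜ + #S = n := by rw [card_compl_add_card, Fintype.card_fin]
  rw [hortho]
  rw [finrank_suppIn] at hsup
  omega

end

/-- If the `n` coordinates are partitioned into `A` and `B`, then any subspace `G` of the
Pauli space decomposes as `G = G_A ⊕ G_B ⊕ G'` for some `G'`, and
`dim (G^⊥)_A = 2|A| − dim G_A − dim G'`, `dim (G^⊥)_B = 2|B| − dim G_B − dim G'`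
(stated additively). -/
theorem statement_1 {n : ℕ} (A B : Finset (Fin n)) (hdisj : Disjoint A B)
    (hunion : A ∪ B = Finset.univ) (G : Submodule (ZMod 2) (PauliSpace n)) :
    ∃ G' : Submodule (ZMod 2) (PauliSpace n), G' ≤ G ∧
      Disjoint (G ⊓ suppIn A) (G ⊓ suppIn B) ∧
      Disjoint ((G ⊓ suppIn A) ⊔ (G ⊓ suppIn B)) G' ∧
      (G ⊓ suppIn A) ⊔ (G ⊓ suppIn B) ⊔ G' = G ∧
      Module.finrank (ZMod 2) (sympOrtho G ⊓ suppIn A : Submodule (ZMod 2) (PauliSpace n))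
        + Module.finrank (ZMod 2) (G ⊓ suppIn A : Submodule (ZMod 2) (PauliSpace n))
        + Module.finrank (ZMod 2) G' = 2 * A.card ∧
      Module.finrank (ZMod 2) (sympOrtho G ⊓ suppIn B : Submodule (ZMod 2) (PauliSpace n))
        + Module.finrank (ZMod 2) (G ⊓ suppIn B : Submodule (ZMod 2) (PauliSpace n))
        + Module.finrank (ZMod 2) G' = 2 * B.card := by
  have hAB : IsCompl A B := ⟨hdisj, codisjoint_iff.mpr hunion⟩
  have hGAB : Disjoint (G ⊓ suppIn A) (G ⊓ suppIn B) :=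
    (disjoint_suppIn hdisj).mono inf_le_right inf_le_right
  obtain ⟨G', hG'disj, hG'sup⟩ := IsModularLattice.exists_disjoint_and_sup_eq
    (sup_le inf_le_left inf_le_left : (G ⊓ suppIn A) ⊔ (G ⊓ suppIn B) ≤ G)
  have hG : finrank (ZMod 2) G = finrank (ZMod 2) ↥(G ⊓ suppIn A)
      + finrank (ZMod 2) ↥(G ⊓ suppIn B) + finrank (ZMod 2) G' := by
    conv_lhs => rw [← hG'sup]
    rw [Submodule.finrank_sup_of_disjoint hG'disj, Submodule.finrank_sup_of_disjoint hGAB]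
  have hA := finrank_sympOrtho_inf_suppIn_add_finrank G A
  have hB := finrank_sympOrtho_inf_suppIn_add_finrank G B
  rw [hAB.compl_eq] at hA
  rw [hAB.symm.compl_eq] at hB
  exact ⟨G', hG'sup ▸ le_sup_right, hGAB, hG'disj, hG'sup, by omega, by omega⟩
end

section
/- Let F₄ = F₂(ω) with ω² + ω + 1 = 0, and let φ : F₂[x,y,z] → F₄[t] be the F₂-algebra homomorphism determined by φ(x) = 1+t, φ(y) = 1+ωt, φ(z) = 1+ω²t. Then ker φ is exactly the ideal p = (1+x+y+z, 1+xy+yz+zx) of F₂[x,y,z]. -/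
/-!
Modulo `p` one has `z ≡ 1 + x + y` and `y² ≡ (1 + x) y + x² + x + 1`, so every polynomial is
congruent to `a(x - 1) + y b(x - 1)` with `a, b ∈ F₂[t]`. Its image under `φ` is
`a(t) + (1 + ωt) b(t) = (a + b)(t) + ω t b(t)`, and since `1, ω` are linearly independent over
`F₂` this vanishes only for `a = b = 0`. Conversely both generators of `p` are killed by `φ`
because `1 + ω + ω² = 0` in characteristic `2`.
-/

open Polynomial

theorem Polynomial.eq_zero_of_map_add_C_mul_map_eq_zero {k K : Type*} [Field k] [Field K]
    [Algebra k K] {ω : K} (hω : ω ∉ Set.range (algebraMap k K)) {a b : k[X]}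
    (h : a.map (algebraMap k K) + C ω * b.map (algebraMap k K) = 0) : a = 0 ∧ b = 0 := by
  have hcoeff (n : ℕ) : algebraMap k K (a.coeff n) + ω * algebraMap k K (b.coeff n) = 0 := by
    simpa using congrArg (coeff · n) h
  have hb : b = 0 := by
    ext n
    by_contra hn
    refine hω ⟨-a.coeff n / b.coeff n, ?_⟩
    rw [map_div₀, map_neg, div_eq_iff (by simpa using hn)]
    linear_combination -(hcoeff n)
  refine ⟨?_, hb⟩
  ext n
  simpa [hb] using hcoeff n

namespace LineKernel

section NormalForm

variable (R : Type*) [CommRing R]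

noncomputable def lineIdeal : Ideal (MvPolynomial (Fin 3) R) :=
  Ideal.span
    {1 + MvPolynomial.X 0 + MvPolynomial.X 1 + MvPolynomial.X 2,
     1 + MvPolynomial.X 0 * MvPolynomial.X 1 + MvPolynomial.X 1 * MvPolynomial.X 2 +
       MvPolynomial.X 2 * MvPolynomial.X 0}

variable {R}

/-- Based at `X 0 - 1`, which `lineMap` sends to `X`. -/
noncomputable def normalForm (a b : R[X]) : MvPolynomial (Fin 3) R :=
  aeval (MvPolynomial.X 0 - 1) a + MvPolynomial.X 1 * aeval (MvPolynomial.X 0 - 1) b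

variable [CharP R 2]

theorem exists_X_mul_normalForm_sub_mem (i : Fin 3) (a b : R[X]) :
    ∃ a' b' : R[X], MvPolynomial.X i * normalForm a b - normalForm a' b' ∈ lineIdeal R := by
  simp only [lineIdeal, Ideal.mem_span_pair]
  fin_cases i
  · refine ⟨(X + 1) * a, (X + 1) * b, 0, 0, ?_⟩
    simp only [normalForm, map_mul, map_add, map_one, aeval_X, Fin.zero_eta, Fin.isValue]
    ring
  · refine ⟨(X ^ 2 + X + 1) * b, a + X * b, aeval (MvPolynomial.X 0 - 1) b *
      (MvPolynomial.X 0 + MvPolynomial.X 1), aeval (MvPolynomial.X 0 - 1) b, ?_⟩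
    simp only [normalForm, map_mul, map_add, map_one, map_pow, aeval_X]
    grind
  · refine ⟨X * a + (X ^ 2 + X + 1) * b, a, normalForm a b + aeval (MvPolynomial.X 0 - 1) b *
      (MvPolynomial.X 0 + MvPolynomial.X 1), aeval (MvPolynomial.X 0 - 1) b, ?_⟩
    simp only [normalForm, map_mul, map_add, map_one, map_pow, aeval_X]
    grind

theorem exists_sub_normalForm_mem (f : MvPolynomial (Fin 3) R) :
    ∃ a b : R[X], f - normalForm a b ∈ lineIdeal R := by
  induction f using MvPolynomial.induction_on with
  | C r => exact ⟨C r, 0, by simp [normalForm, MvPolynomial.algebraMap_eq]⟩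
  | add p q hp hq =>
    obtain ⟨a, b, hab⟩ := hp
    obtain ⟨c, d, hcd⟩ := hq
    refine ⟨a + c, b + d, ?_⟩
    convert add_mem hab hcd using 1
    simp only [normalForm, map_add]
    ring
  | mul_X p i hp =>
    obtain ⟨a, b, hab⟩ := hp
    obtain ⟨a', b', h⟩ := exists_X_mul_normalForm_sub_mem i a b
    refine ⟨a', b', ?_⟩
    convert add_mem (Ideal.mul_mem_left _ (MvPolynomial.X i) hab) h using 1
    ring

end NormalForm

section LineMap

variable (R : Type*) {K : Type*} [CommRing R] [CommRing K] [Algebra R K]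

noncomputable def lineMap (ω : K) : MvPolynomial (Fin 3) R →ₐ[R] K[X] :=
  MvPolynomial.aeval ![1 + X, 1 + C ω * X, 1 + C (ω ^ 2) * X]

variable {R}

theorem lineMap_normalForm (ω : K) (a b : R[X]) :
    lineMap R ω (normalForm a b) =
      a.map (algebraMap R K) + (1 + C ω * X) * b.map (algebraMap R K) := by
  have hx : lineMap R ω (MvPolynomial.X 0 - 1) = X := by simp [lineMap]
  have hy : lineMap R ω (MvPolynomial.X 1) = 1 + C ω * X := by simp [lineMap]
  simp only [normalForm, map_add, map_mul, ← aeval_algHom_apply, hx, hy, aeval_X_left_eq_map]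

theorem lineIdeal_le_ker [CharP K 2] {ω : K} (hω : ω ^ 2 + ω + 1 = 0) :
    lineIdeal R ≤ RingHom.ker (lineMap R ω) := by
  have hωC : C ω ^ 2 + C ω + 1 = 0 := by simpa using congrArg C hω
  simp only [lineIdeal, Ideal.span_le, Set.insert_subset_iff, Set.singleton_subset_iff, lineMap,
    RingHom.mem_ker, SetLike.mem_coe, map_add, map_mul, map_one, map_pow,
    MvPolynomial.aeval_X, Matrix.cons_val_zero, Matrix.cons_val_one, Matrix.cons_val]
  constructor <;> grind

end LineMap

theorem ker_lineMap {k K : Type*} [Field k] [CharP k 2] [Field K] [CharP K 2] [Algebra k K]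
    {ω : K} (hω : ω ^ 2 + ω + 1 = 0) (hωk : ω ∉ Set.range (algebraMap k K)) :
    RingHom.ker (lineMap k ω) = lineIdeal k := by
  refine le_antisymm (fun f hf => ?_) (lineIdeal_le_ker hω)
  obtain ⟨a, b, hab⟩ := exists_sub_normalForm_mem f
  have hφ : lineMap k ω (normalForm a b) = 0 := by
    have h := lineIdeal_le_ker hω hab
    rwa [RingHom.mem_ker, map_sub, RingHom.mem_ker.mp hf, zero_sub, neg_eq_zero] at h
  obtain ⟨hab', hb⟩ : a + b = 0 ∧ X * b = 0 := by
    refine eq_zero_of_map_add_C_mul_map_eq_zero hωk ?_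
    rw [← hφ, lineMap_normalForm]
    simp only [Polynomial.map_add, Polynomial.map_mul, map_X]
    ring
  obtain rfl : b = 0 := by simpa using hb
  obtain rfl : a = 0 := by simpa using hab'
  simpa [normalForm] using hab

theorem notMem_range_algebraMap_of_sq_add_self_add_one_eq_zero {K : Type*} [Field K]
    [Algebra (ZMod 2) K] {ω : K} (hω : ω ^ 2 + ω + 1 = 0) : ω ∉ Set.range (algebraMap (ZMod 2) K) := by
  rintro ⟨r, rfl⟩
  have hr : algebraMap (ZMod 2) K (r ^ 2 + r + 1) = 0 := by
    simp only [map_add, map_pow, map_one]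
    exact hω
  have hF₂ : ∀ s : ZMod 2, s ^ 2 + s + 1 ≠ 0 := by decide
  exact hF₂ r ((map_eq_zero _).mp hr)

end LineKernel

/-- Let `ω ∈ F₄` with `ω² + ω + 1 = 0`, and let `φ : F₂[x,y,z] → F₄[t]` be the
`F₂`-algebra homomorphism with `φ(x) = 1+t`, `φ(y) = 1+ωt`, `φ(z) = 1+ω²t`.
Then `ker φ = (1+x+y+z, 1+xy+yz+zx)`. -/
theorem statement_4 (ω : GaloisField 2 2) (hω : ω ^ 2 + ω + 1 = 0) :
    RingHom.ker (MvPolynomial.aeval (R := ZMod 2)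
        (fun i : Fin 3 =>
          ![1 + (Polynomial.X : Polynomial (GaloisField 2 2)),
            1 + Polynomial.C ω * Polynomial.X,
            1 + Polynomial.C (ω ^ 2) * Polynomial.X] i)).toRingHom =
    Ideal.span
      {1 + MvPolynomial.X 0 + MvPolynomial.X 1 + MvPolynomial.X 2,
       1 + MvPolynomial.X 0 * MvPolynomial.X 1 + MvPolynomial.X 1 * MvPolynomial.X 2 +
         MvPolynomial.X 2 * MvPolynomial.X 0} :=
  LineKernel.ker_lineMap hω (LineKernel.notMem_range_algebraMap_of_sq_add_self_add_one_eq_zero hω)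
end

section
/- Let S = F₂[x,y,z] and p = (1+x+y+z, 1+xy+yz+zx) ⊆ S. Suppose m₁e₁ + m₂e₂ ∈ p where e₁, e₂ ∈ S are polynomials and m₁, m₂ are monomials with gcd(m₁,m₂)=1. Then either both e₁ ∈ p and e₂ ∈ p, or max(deg e₁, deg e₂) ≥ max(deg m₁, deg m₂). -/
/-!
Let `ω` be a primitive cube root of unity over `F₂`. In the coordinates `1 + xᵢ` the two
generators of `p` are the elementary symmetric polynomials of degree 1 and 2, which vanish
on `(1, ω, ω²)`; so `p` lies in the kernel of `φ : xᵢ ↦ 1 + ωⁱ t` into `F₂(ω)[t]`.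
Conversely, modulo `p` every polynomial is `a(1 + x) + (1 + y) b(1 + x)` with `a, b ∈ F₂[t]`,
whose image `a + ω t b` vanishes only when `a = b = 0`; hence `p = ker φ`.

Monomials are sent to products of powers of the pairwise coprime linear forms `1 + ωⁱ t`, so
`φ m₁` and `φ m₂` are coprime when `m₁, m₂` share no variable. Then
`φ m₁ · φ e₁ = -φ m₂ · φ e₂` forces either `φ e₁ = φ e₂ = 0`, or `φ m₁ ∣ φ e₂` and
`φ m₂ ∣ φ e₁`. As `φ` preserves the degree of monomials and never raises degrees, the bound
follows.
-/

open MvPolynomial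

open scoped Polynomial

namespace Polynomial

theorem isCoprime_one_add_C_mul_X {K : Type*} [Field K] {a b : K} (hab : a ≠ b) :
    IsCoprime (1 + C a * X) (1 + C b * X) := by
  have hu : C (b - a) * C (b - a)⁻¹ = 1 := by
    rw [← C_mul, mul_inv_cancel₀ (sub_ne_zero.2 hab.symm), C_1]
  refine ⟨C b * C (b - a)⁻¹, -(C a * C (b - a)⁻¹), ?_⟩
  rw [C_sub] at hu
  linear_combination hu

theorem eq_zero_and_eq_zero_of_map_add_C_mul_map_eq_zero {F K : Type*} [Field F] [CommRing K]
    [Nontrivial K] [Algebra F K] {ω : K} (hω : ω ∉ Set.range (algebraMap F K)) {U V : F[X]}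
    (h : U.map (algebraMap F K) + C ω * V.map (algebraMap F K) = 0) : U = 0 ∧ V = 0 := by
  have hV : V = 0 := by
    ext n
    have hn := congrArg (coeff · n) h
    simp only [coeff_add, coeff_C_mul, coeff_map, coeff_zero] at hn
    by_contra hVn
    have hinv := congrArg (algebraMap F K) (mul_inv_cancel₀ hVn)
    refine hω ⟨-U.coeff n * (V.coeff n)⁻¹, ?_⟩
    simp only [map_mul, map_neg, map_one] at hinv ⊢
    linear_combination -algebraMap F K (V.coeff n)⁻¹ * hn + ω * hinv
  subst hV
  simpa [Polynomial.map_eq_zero_iff (algebraMap F K).injective] using h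

theorem eq_zero_and_eq_zero_or_natDegree_le_of_isCoprime {R : Type*} [CommRing R] [IsDomain R]
    {a b f g : R[X]} (hab : IsCoprime a b) (ha : a ≠ 0) (hb : b ≠ 0) (h : a * f + b * g = 0) :
    (f = 0 ∧ g = 0) ∨ (a.natDegree ≤ g.natDegree ∧ b.natDegree ≤ f.natDegree) := by
  rcases eq_or_ne g 0 with rfl | hg
  · left; simpa [ha] using h
  have hf : f ≠ 0 := by rintro rfl; simp [hb, hg] at h
  refine .inr ⟨natDegree_le_of_dvd ?_ hg, natDegree_le_of_dvd ?_ hf⟩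
  · exact hab.dvd_of_dvd_mul_left ⟨-f, by linear_combination h⟩
  · exact hab.symm.dvd_of_dvd_mul_left ⟨-g, by linear_combination h⟩

end Polynomial

theorem IsPrimitiveRoot.notMem_range_algebraMap_zmod_two {K : Type*} [CommRing K] [Nontrivial K]
    [Algebra (ZMod 2) K] {ω : K} {k : ℕ} (hω : IsPrimitiveRoot ω k) (hk : 1 < k) :
    ω ∉ Set.range (algebraMap (ZMod 2) K) := by
  rintro ⟨r, rfl⟩
  fin_cases r
  · exact hω.ne_zero (by omega) (map_zero _)
  · exact hω.ne_one hk (map_one _)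

namespace MvPolynomial

variable {R S σ : Type*} [CommSemiring R] [CommSemiring S] [Algebra R S]

theorem isCoprime_aeval_monomial {v : σ → S} (hv : Pairwise fun i j => IsCoprime (v i) (v j))
    {d₁ d₂ : σ →₀ ℕ} (hd : ∀ i, d₁ i = 0 ∨ d₂ i = 0) :
    IsCoprime (aeval v (monomial d₁ (1 : R))) (aeval v (monomial d₂ (1 : R))) := by
  simp only [aeval_monomial, map_one, one_mul]
  refine IsCoprime.prod_left fun i hi => IsCoprime.prod_right fun j hj => (hv ?_).pow
  rintro rfl
  rw [Finsupp.mem_support_iff] at hi hj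
  exact (hd i).elim hi hj

theorem aeval_monomial_ne_zero [NoZeroDivisors S] [Nontrivial S] {v : σ → S}
    (hv : ∀ i, v i ≠ 0) (d : σ →₀ ℕ) : aeval v (monomial d (1 : R)) ≠ 0 := by
  rw [aeval_monomial, map_one, one_mul]
  exact Finset.prod_ne_zero_iff.2 fun i _ => pow_ne_zero _ (hv i)

theorem natDegree_aeval_le_totalDegree {v : σ → S[X]} (hv : ∀ i, (v i).natDegree ≤ 1)
    (f : MvPolynomial σ R) : (aeval v f).natDegree ≤ f.totalDegree := by
  conv_lhs => rw [f.as_sum, map_sum]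
  refine Polynomial.natDegree_sum_le_of_forall_le _ _ fun d hd => ?_
  rw [aeval_monomial, Polynomial.algebraMap_apply]
  refine (Polynomial.natDegree_C_mul_le _ _).trans <|
    (Polynomial.natDegree_prod_le _ _).trans <| le_trans ?_ (le_totalDegree hd)
  exact Finset.sum_le_sum fun i _ => by simpa using Polynomial.natDegree_pow_le_of_le (d i) (hv i)

theorem natDegree_aeval_monomial [IsDomain S] [Nontrivial R] {v : σ → S[X]}
    (hv : ∀ i, (v i).natDegree = 1) (d : σ →₀ ℕ) :
    (aeval v (monomial d (1 : R))).natDegree = (monomial d (1 : R)).totalDegree := by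
  have hv₀ (i : σ) : v i ≠ 0 := fun h => by simpa [h] using hv i
  rw [aeval_monomial, map_one, one_mul, totalDegree_monomial _ one_ne_zero, Finsupp.prod,
    Polynomial.natDegree_prod _ _ fun i _ => pow_ne_zero _ (hv₀ i)]
  simp [Polynomial.natDegree_pow, hv, Finsupp.sum]

end MvPolynomial

noncomputable def cubicIdeal : Ideal (MvPolynomial (Fin 3) (ZMod 2)) :=
  Ideal.span {1 + X 0 + X 1 + X 2, 1 + X 0 * X 1 + X 1 * X 2 + X 2 * X 0}

noncomputable def cubicNormalForm (p₀ p₁ : (ZMod 2)[X]) : MvPolynomial (Fin 3) (ZMod 2) :=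
  Polynomial.aeval (1 + X 0) p₀ + (1 + X 1) * Polynomial.aeval (1 + X 0) p₁

-- The witnesses come from `z ≡ 1 + x + y` and `(1 + y)² ≡ (1 + x)(1 + y) + (1 + x)²` modulo `p`.
theorem exists_X_mul_cubicNormalForm_sub_mem (i : Fin 3) (p₀ p₁ : (ZMod 2)[X]) :
    ∃ q₀ q₁, X i * cubicNormalForm p₀ p₁ - cubicNormalForm q₀ q₁ ∈ cubicIdeal := by
  -- `reduce_mod_char!` only sees a `CharP` instance that is a local hypothesis.
  have : CharP (MvPolynomial (Fin 3) (ZMod 2)) 2 := inferInstance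
  simp only [cubicIdeal, Ideal.mem_span_pair]
  fin_cases i
  · refine ⟨(Polynomial.X + 1) * p₀, (Polynomial.X + 1) * p₁, 0, 0, ?_⟩
    simp only [cubicNormalForm, map_add, map_mul, Polynomial.aeval_X, map_one, Fin.zero_eta]
    ring_nf; reduce_mod_char!
  · refine ⟨p₀ + Polynomial.X ^ 2 * p₁, p₀ + (Polynomial.X + 1) * p₁,
      Polynomial.aeval (1 + X 0) p₁ * (X 0 + X 1), Polynomial.aeval (1 + X 0) p₁, ?_⟩
    simp only [cubicNormalForm, map_add, map_mul, map_pow, Polynomial.aeval_X, map_one, Fin.mk_one]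
    ring_nf; reduce_mod_char!
  · refine ⟨(Polynomial.X + 1) * p₀ + Polynomial.X ^ 2 * p₁, p₀ + p₁,
      cubicNormalForm p₀ p₁ + Polynomial.aeval (1 + X 0) p₁ * (X 0 + X 1),
      Polynomial.aeval (1 + X 0) p₁, ?_⟩
    simp only [cubicNormalForm, map_add, map_mul, map_pow, Polynomial.aeval_X, map_one,
      Fin.reduceFinMk]
    ring_nf; reduce_mod_char!

theorem exists_sub_cubicNormalForm_mem (f : MvPolynomial (Fin 3) (ZMod 2)) :
    ∃ p₀ p₁, f - cubicNormalForm p₀ p₁ ∈ cubicIdeal := by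
  induction f using MvPolynomial.induction_on with
  | C a => exact ⟨Polynomial.C a, 0, by simp [cubicNormalForm, ← MvPolynomial.algebraMap_eq]⟩
  | add f g hf hg =>
    obtain ⟨p₀, p₁, hp⟩ := hf
    obtain ⟨q₀, q₁, hq⟩ := hg
    refine ⟨p₀ + q₀, p₁ + q₁, ?_⟩
    convert add_mem hp hq using 1
    simp only [cubicNormalForm, map_add]
    ring
  | mul_X f i hf =>
    obtain ⟨p₀, p₁, hp⟩ := hf
    obtain ⟨q₀, q₁, hq⟩ := exists_X_mul_cubicNormalForm_sub_mem i p₀ p₁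
    refine ⟨q₀, q₁, ?_⟩
    convert add_mem (cubicIdeal.mul_mem_left (X i) hp) hq using 1
    ring

section CubicCurve

variable {K : Type*} [Field K] {ω : K}

noncomputable def cubicCurve (ω : K) : Fin 3 → K[X] :=
  fun i => 1 + Polynomial.C (ω ^ (i : ℕ)) * Polynomial.X

theorem natDegree_cubicCurve (hω : ω ≠ 0) (i : Fin 3) : (cubicCurve ω i).natDegree = 1 := by
  rw [cubicCurve, add_comm, ← Polynomial.C_1]
  exact Polynomial.natDegree_linear (pow_ne_zero _ hω)

theorem cubicCurve_ne_zero (hω : ω ≠ 0) (i : Fin 3) : cubicCurve ω i ≠ 0 := fun h => by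
  simpa [h] using natDegree_cubicCurve hω i

theorem pairwise_isCoprime_cubicCurve (hω : IsPrimitiveRoot ω 3) :
    Pairwise fun i j => IsCoprime (cubicCurve ω i) (cubicCurve ω j) := fun i j hij =>
  Polynomial.isCoprime_one_add_C_mul_X fun h => hij (Fin.ext (hω.pow_inj i.isLt j.isLt h))

variable [Algebra (ZMod 2) K]

theorem cubicIdeal_le_ker_aeval_cubicCurve (hω : ω ^ 2 + ω + 1 = 0) :
    cubicIdeal ≤ RingHom.ker (aeval (cubicCurve ω)) := by
  have := charP_of_injective_algebraMap' (ZMod 2) (A := K) 2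
  have h2 : (2 : K[X]) = 0 := CharTwo.two_eq_zero
  have hC : Polynomial.C ω ^ 2 + Polynomial.C ω + 1 = 0 := by simpa using congrArg Polynomial.C hω
  rw [cubicIdeal, Ideal.span_le]
  rintro g (rfl | rfl) <;>
    simp only [SetLike.mem_coe, RingHom.mem_ker, map_add, map_mul, map_one, aeval_X, cubicCurve,
      Polynomial.C_pow, Fin.val_zero, Fin.val_one, Fin.val_two, pow_zero, pow_one, one_mul]
  · linear_combination Polynomial.X * hC + 2 * h2
  · linear_combination (2 * Polynomial.X + Polynomial.X ^ 2 * Polynomial.C ω) * hC + 2 * h2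

theorem aeval_cubicCurve_cubicNormalForm (p₀ p₁ : (ZMod 2)[X]) :
    aeval (cubicCurve ω) (cubicNormalForm p₀ p₁) =
      p₀.map (algebraMap (ZMod 2) K) +
        Polynomial.C ω * (Polynomial.X * p₁).map (algebraMap (ZMod 2) K) := by
  have := charP_of_injective_algebraMap' (ZMod 2) (A := K) 2
  have hX : aeval (cubicCurve ω) (1 + X 0 : MvPolynomial (Fin 3) (ZMod 2)) = Polynomial.X := by
    simp only [map_add, map_one, aeval_X, cubicCurve, Fin.val_zero, pow_zero, one_mul]
    ring_nf; reduce_mod_char!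
  have hA (p : (ZMod 2)[X]) :
      aeval (cubicCurve ω) (Polynomial.aeval (1 + X 0 : MvPolynomial (Fin 3) (ZMod 2)) p) =
        p.map (algebraMap (ZMod 2) K) := by
    rw [← Polynomial.aeval_algHom_apply, hX, Polynomial.aeval_X_left_eq_map]
  simp only [cubicNormalForm, map_add, map_mul, hA, map_one, aeval_X, cubicCurve,
    Polynomial.map_mul, Polynomial.map_X, Fin.val_one, pow_one]
  ring_nf; reduce_mod_char!

theorem aeval_cubicCurve_eq_zero_iff (hω : IsPrimitiveRoot ω 3)
    (f : MvPolynomial (Fin 3) (ZMod 2)) : aeval (cubicCurve ω) f = 0 ↔ f ∈ cubicIdeal := by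
  have hω' : ω ^ 2 + ω + 1 = 0 := by
    have h := hω.geom_sum_eq_zero (by norm_num)
    simp only [Finset.sum_range_succ, Finset.sum_range_zero, pow_zero, pow_one, zero_add] at h
    linear_combination h
  refine ⟨fun hf => ?_, fun hf => cubicIdeal_le_ker_aeval_cubicCurve hω' hf⟩
  obtain ⟨p₀, p₁, hp⟩ := exists_sub_cubicNormalForm_mem f
  have hnf : aeval (cubicCurve ω) (cubicNormalForm p₀ p₁) = 0 := by
    simpa [hf] using cubicIdeal_le_ker_aeval_cubicCurve hω' hp
  rw [aeval_cubicCurve_cubicNormalForm] at hnf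
  obtain ⟨rfl, hp₁⟩ := Polynomial.eq_zero_and_eq_zero_of_map_add_C_mul_map_eq_zero
    (hω.notMem_range_algebraMap_zmod_two (by norm_num)) hnf
  obtain rfl : p₁ = 0 := by simpa using hp₁
  simpa [cubicNormalForm] using hp

end CubicCurve

/-- (No-strings rule for the cubic code, algebraic core.)  In `S = F₂[x,y,z]` with
`p = (1+x+y+z, 1+xy+yz+zx)`, if `m₁e₁ + m₂e₂ ∈ p` for monomials `m₁, m₂` sharing no
common variable, then either both `e₁ ∈ p` and `e₂ ∈ p`, or
`max(deg e₁, deg e₂) ≥ max(deg m₁, deg m₂)`. -/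
theorem statement_5 (d₁ d₂ : Fin 3 →₀ ℕ) (hcop : ∀ i, d₁ i = 0 ∨ d₂ i = 0)
    (e₁ e₂ : MvPolynomial (Fin 3) (ZMod 2))
    (p : Ideal (MvPolynomial (Fin 3) (ZMod 2)))
    (hp : p = Ideal.span
      {1 + X 0 + X 1 + X 2, 1 + X 0 * X 1 + X 1 * X 2 + X 2 * X 0})
    (hmem : monomial d₁ 1 * e₁ + monomial d₂ 1 * e₂ ∈ p) :
    (e₁ ∈ p ∧ e₂ ∈ p) ∨
      max (monomial d₁ (1 : ZMod 2)).totalDegree (monomial d₂ (1 : ZMod 2)).totalDegree ≤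
        max e₁.totalDegree e₂.totalDegree := by
  change p = cubicIdeal at hp
  subst hp
  have : NeZero ((3 : ℕ) : ZMod 2) := ⟨by decide⟩
  obtain ⟨ω, hω⟩ : ∃ ω : CyclotomicField 3 (ZMod 2), IsPrimitiveRoot ω 3 :=
    ⟨_, IsCyclotomicExtension.zeta_spec 3 (ZMod 2) _⟩
  have hω₀ : ω ≠ 0 := hω.ne_zero three_ne_zero
  have hker := aeval_cubicCurve_eq_zero_iff hω
  have hle (e : MvPolynomial (Fin 3) (ZMod 2)) :=
    natDegree_aeval_le_totalDegree (fun i => (natDegree_cubicCurve hω₀ i).le) e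
  have hφ := (hker _).2 hmem
  rw [map_add, map_mul, map_mul] at hφ
  rcases Polynomial.eq_zero_and_eq_zero_or_natDegree_le_of_isCoprime
      (isCoprime_aeval_monomial (pairwise_isCoprime_cubicCurve hω) hcop)
      (aeval_monomial_ne_zero (cubicCurve_ne_zero hω₀) d₁)
      (aeval_monomial_ne_zero (cubicCurve_ne_zero hω₀) d₂) hφ with ⟨h₁, h₂⟩ | ⟨h₁, h₂⟩
  · exact .inl ⟨(hker e₁).1 h₁, (hker e₂).1 h₂⟩
  · rw [← natDegree_aeval_monomial (natDegree_cubicCurve hω₀),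
      ← natDegree_aeval_monomial (natDegree_cubicCurve hω₀)]
    exact .inr <| (max_le_max (h₁.trans (hle e₂)) (h₂.trans (hle e₁))).trans_eq (max_comm _ _)
end

section
/- Let F be a finite field and R = F[x₁^{±1}, …, x_D^{±1}] the Laurent polynomial ring in D variables. If J ⊆ R is a proper ideal with Krull dimension dim(R/J) = 0, then there exists an integer L ≥ 1 such that the ideal (x₁^L − 1, …, x_D^L − 1) is contained in J. -/
/-!
A finitely generated algebra of Krull dimension zero over a finite field is finite-dimensional
over it (Artinian over a Jacobson ring), hence a finite ring. Its unit group is then a finite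
group, whose exponent `L` kills every unit; the monomials `xᵢ` are units of the Laurent
polynomial ring, so `xᵢ ^ L - 1 ∈ J`.
-/

theorem AddMonoid.fg_of_moduleFinite_int (G : Type*) [AddCommGroup G] [Module.Finite ℤ G] :
    AddMonoid.FG G :=
  AddGroup.fg_iff_addMonoid_fg.mp (Module.Finite.iff_addGroup_fg.mp ‹_›)

theorem Algebra.FiniteType.finite_of_krullDimLE_zero (R A : Type*) [CommRing R] [Finite R]
    [CommRing A] [Algebra R A] [Algebra.FiniteType R A] [Ring.KrullDimLE 0 A] : Finite A :=
  have : Module.Finite R A := (Module.finite_iff_krullDimLE_zero R A).mpr ‹_›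
  Module.finite_of_finite R

theorem Ideal.exists_pow_sub_one_mem_of_finite_quotient {R : Type*} [CommRing R] (J : Ideal R)
    [Finite (R ⧸ J)] : ∃ L : ℕ, 1 ≤ L ∧ ∀ u : R, IsUnit u → u ^ L - 1 ∈ J := by
  refine ⟨Monoid.exponent (R ⧸ J)ˣ, Nat.one_le_iff_ne_zero.mpr Monoid.exponent_ne_zero_of_finite,
    fun u hu ↦ ?_⟩
  rw [← Ideal.Quotient.eq_zero_iff_mem, map_sub, map_pow, map_one, sub_eq_zero]
  simpa using congrArg Units.val (Monoid.pow_exponent_eq_one (hu.map (Ideal.Quotient.mk J)).unit)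

theorem AddMonoidAlgebra.isUnit_single_one {k G : Type*} [CommSemiring k] [AddGroup G] (g : G) :
    IsUnit (single g (1 : k)) :=
  (Group.isUnit (Multiplicative.ofAdd g)).map (AddMonoidAlgebra.of k G)

theorem statement_7_general (F : Type*) [Field F] [Fintype F] (D : ℕ)
    (J : Ideal (AddMonoidAlgebra F (Fin D →₀ ℤ)))
    (hdim : ringKrullDim (AddMonoidAlgebra F (Fin D →₀ ℤ) ⧸ J) = 0) :
    ∃ L : ℕ, 1 ≤ L ∧
      Ideal.span (Set.range fun i : Fin D =>
          (AddMonoidAlgebra.single (Finsupp.single i (L : ℤ)) (1 : F) - 1)) ≤ J := by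
  have : Ring.KrullDimLE 0 (AddMonoidAlgebra F (Fin D →₀ ℤ) ⧸ J) :=
    Ring.krullDimLE_iff.mpr hdim.le
  have := AddMonoid.fg_of_moduleFinite_int (Fin D →₀ ℤ)
  have := Algebra.FiniteType.finite_of_krullDimLE_zero F (AddMonoidAlgebra F (Fin D →₀ ℤ) ⧸ J)
  obtain ⟨L, hL, hunit⟩ := J.exists_pow_sub_one_mem_of_finite_quotient
  refine ⟨L, hL, Ideal.span_le.mpr ?_⟩
  rintro _ ⟨i, rfl⟩
  convert hunit _ (AddMonoidAlgebra.isUnit_single_one (k := F) (Finsupp.single i 1)) using 2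
  simp [AddMonoidAlgebra.single_pow]

/-- Let `F` be a finite field, `R = F[x₁^{±1},…,x_D^{±1}]` the Laurent polynomial ring in
`D` variables (realized as the group algebra of `ℤ^D` over `F`).  If `J ⊆ R` is a proper
ideal with `dim (R/J) = 0` (Krull dimension), then there exists `L ≥ 1` with
`(x₁^L − 1, …, x_D^L − 1) ⊆ J`. -/
theorem statement_7 (F : Type*) [Field F] [Fintype F] (D : ℕ)
    (J : Ideal (AddMonoidAlgebra F (Fin D →₀ ℤ))) (hJ : J ≠ ⊤)
    (hdim : ringKrullDim (AddMonoidAlgebra F (Fin D →₀ ℤ) ⧸ J) = 0) :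
    ∃ L : ℕ, 1 ≤ L ∧
      Ideal.span (Set.range fun i : Fin D =>
          (AddMonoidAlgebra.single (Finsupp.single i (L : ℤ)) (1 : F) - 1)) ≤ J :=
  statement_7_general F D J hdim
end

section
/- Let p(t) ∈ F₂[t] be a primitive polynomial of the field F_{2^w} over F₂ (i.e. an irreducible polynomial of degree w whose roots generate the multiplicative group F_{2^w}^×), and let N = 2^w − 1. Work in the Laurent polynomial ring R = F₂[x^{±1}, y^{±1}]. If x^a y^b − 1 lies in the ideal (p(x), p(y)) for integers a, b, then either (a,b)=(0,0), or |a| + |b| ≥ N. -/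
/-!
A ring homomorphism `F₂[x^{±1}, y^{±1}] → K` sending `x, y` to roots `u, v` of `p` kills the
ideal `(p(x), p(y))`, so `u^a v^b = 1`. Taking `(u, v) = (θ, θ)` and `(θ, θ²)` (the square of a
root of a polynomial over `F₂` is again a root) gives `θ^(a+b) = θ^(a+2b) = 1`, hence the order
`N` of `θ` divides both `a` and `b`.
-/

open AddMonoidAlgebra Polynomial

section LaurentEval

variable {k S : Type*} [CommRing k] [CommRing S] [Algebra k S]

noncomputable def laurentEval (u v : Sˣ) : AddMonoidAlgebra k (ℤ × ℤ) →ₐ[k] S :=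
  AddMonoidAlgebra.lift k S (ℤ × ℤ)
    { toFun := fun g => ((u ^ g.toAdd.1 * v ^ g.toAdd.2 : Sˣ) : S)
      map_one' := by simp
      map_mul' := fun g h => by
        simp only [toAdd_mul, Prod.fst_add, Prod.snd_add, zpow_add, ← Units.val_mul]
        congr 1
        exact mul_mul_mul_comm _ _ _ _ }

theorem laurentEval_single_one (u v : Sˣ) (m n : ℤ) :
    laurentEval u v (single (m, n) (1 : k)) = ((u ^ m * v ^ n : Sˣ) : S) := by
  simp [laurentEval, lift_single]

theorem laurentEval_aeval_single_one_zero (u v : Sˣ) (p : k[X]) :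
    laurentEval u v (aeval (single ((1 : ℤ), (0 : ℤ)) (1 : k)) p) = aeval (u : S) p := by
  rw [← aeval_algHom_apply, laurentEval_single_one]
  simp

theorem laurentEval_aeval_single_zero_one (u v : Sˣ) (p : k[X]) :
    laurentEval u v (aeval (single ((0 : ℤ), (1 : ℤ)) (1 : k)) p) = aeval (v : S) p := by
  rw [← aeval_algHom_apply, laurentEval_single_one]
  simp

theorem zpow_mul_zpow_eq_one_of_mem_span {p : k[X]} {u v : Sˣ}
    (hu : aeval (u : S) p = 0) (hv : aeval (v : S) p = 0) {a b : ℤ}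
    (hmem : (single (a, b) (1 : k) - 1 : AddMonoidAlgebra k (ℤ × ℤ)) ∈
      Ideal.span {aeval (single ((1 : ℤ), (0 : ℤ)) (1 : k)) p,
        aeval (single ((0 : ℤ), (1 : ℤ)) (1 : k)) p}) :
    u ^ a * v ^ b = 1 := by
  have hker : Ideal.span {aeval (single ((1 : ℤ), (0 : ℤ)) (1 : k)) p,
      aeval (single ((0 : ℤ), (1 : ℤ)) (1 : k)) p} ≤ RingHom.ker (laurentEval u v) := by
    rw [Ideal.span_le]
    rintro _ (rfl | rfl)
    · simp [laurentEval_aeval_single_one_zero, hu]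
    · simp [laurentEval_aeval_single_zero_one, hv]
  have hzero := hker hmem
  rw [RingHom.mem_ker, map_sub, map_one, laurentEval_single_one, sub_eq_zero] at hzero
  exact Units.ext hzero

end LaurentEval

theorem aeval_pow_char {p : ℕ} [Fact p.Prime] {S : Type*} [CommRing S] [Algebra (ZMod p) S]
    (x : S) (f : (ZMod p)[X]) : aeval (x ^ p) f = aeval x f ^ p := by
  rw [← expand_aeval, ZMod.expand_card, map_pow]

theorem zpow_eq_one_of_zpow_mul_zpow_eq_one {G : Type*} [Group G] {g : G} {a b : ℤ}
    (h₁ : g ^ a * g ^ b = 1) (h₂ : g ^ a * (g ^ 2) ^ b = 1) : g ^ a = 1 ∧ g ^ b = 1 := by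
  have hb : g ^ b = 1 := by
    have hsq : (g ^ 2) ^ b = g ^ b * g ^ b := by
      rw [← zpow_natCast, ← zpow_mul, mul_comm, zpow_mul, zpow_natCast, sq]
    rw [hsq, ← mul_assoc, h₁, one_mul] at h₂
    exact h₂
  exact ⟨by simpa [hb] using h₁, hb⟩

theorem le_natAbs_add_natAbs_of_dvd {n : ℕ} {a b : ℤ} (ha : (n : ℤ) ∣ a) (hb : (n : ℤ) ∣ b)
    (hab : ¬(a = 0 ∧ b = 0)) : n ≤ a.natAbs + b.natAbs := by
  rw [Int.natCast_dvd] at ha hb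
  by_cases ha0 : a = 0
  · have hb0 : b ≠ 0 := fun hb0 => hab ⟨ha0, hb0⟩
    have := Nat.le_of_dvd (Int.natAbs_pos.mpr hb0) hb
    omega
  · have := Nat.le_of_dvd (Int.natAbs_pos.mpr ha0) ha
    omega

theorem statement_8_general (w : ℕ) (θ : (GaloisField 2 w)ˣ)
    (hθ : ∀ z : (GaloisField 2 w)ˣ, z ∈ Subgroup.zpowers θ) (a b : ℤ)
    (hmem :
      (AddMonoidAlgebra.single (a, b) (1 : ZMod 2) - 1 :
          AddMonoidAlgebra (ZMod 2) (ℤ × ℤ)) ∈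
        Ideal.span
          {Polynomial.aeval
              (AddMonoidAlgebra.single ((1 : ℤ), (0 : ℤ)) (1 : ZMod 2) :
                AddMonoidAlgebra (ZMod 2) (ℤ × ℤ))
              (minpoly (ZMod 2) (θ : GaloisField 2 w)),
            Polynomial.aeval
              (AddMonoidAlgebra.single ((0 : ℤ), (1 : ℤ)) (1 : ZMod 2) :
                AddMonoidAlgebra (ZMod 2) (ℤ × ℤ))
              (minpoly (ZMod 2) (θ : GaloisField 2 w))}) :
    (a = 0 ∧ b = 0) ∨ 2 ^ w - 1 ≤ a.natAbs + b.natAbs := by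
  obtain rfl | hw := Nat.eq_zero_or_pos w
  · exact Or.inr (by simp)
  have hroot : aeval (θ : GaloisField 2 w) (minpoly (ZMod 2) (θ : GaloisField 2 w)) = 0 :=
    minpoly.aeval _ _
  have hroot_sq : aeval ((θ ^ 2 : (GaloisField 2 w)ˣ) : GaloisField 2 w)
      (minpoly (ZMod 2) (θ : GaloisField 2 w)) = 0 := by
    rw [Units.val_pow_eq_pow_val, aeval_pow_char, hroot, zero_pow two_ne_zero]
  obtain ⟨ha, hb⟩ := zpow_eq_one_of_zpow_mul_zpow_eq_one
    (zpow_mul_zpow_eq_one_of_mem_span hroot hroot hmem)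
    (zpow_mul_zpow_eq_one_of_mem_span hroot hroot_sq hmem)
  have hN : orderOf θ = 2 ^ w - 1 := by
    rw [orderOf_eq_card_of_forall_mem_zpowers hθ, Nat.card_units, GaloisField.card 2 w hw.ne']
  by_cases hab : a = 0 ∧ b = 0
  · exact Or.inl hab
  · rw [← hN]
    exact Or.inr (le_natAbs_add_natAbs_of_dvd (orderOf_dvd_iff_zpow_eq_one.mpr ha)
      (orderOf_dvd_iff_zpow_eq_one.mpr hb) hab)

/-- Let `p(t)` be the minimal polynomial over `F₂` of a generator `θ` of `F_{2^w}^×`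
(a primitive polynomial), and `N = 2^w − 1`.  In the Laurent polynomial ring
`R = F₂[x^{±1}, y^{±1}]` (the group algebra of `ℤ²` over `F₂`), if
`x^a y^b − 1 ∈ (p(x), p(y))` then either `(a,b) = (0,0)` or `|a| + |b| ≥ N`. -/
theorem statement_8 (w : ℕ) (hw : 1 ≤ w) (θ : (GaloisField 2 w)ˣ)
    (hθ : ∀ z : (GaloisField 2 w)ˣ, z ∈ Subgroup.zpowers θ) (a b : ℤ)
    (hmem :
      (AddMonoidAlgebra.single (a, b) (1 : ZMod 2) - 1 :
          AddMonoidAlgebra (ZMod 2) (ℤ × ℤ)) ∈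
        Ideal.span
          {Polynomial.aeval
              (AddMonoidAlgebra.single ((1 : ℤ), (0 : ℤ)) (1 : ZMod 2) :
                AddMonoidAlgebra (ZMod 2) (ℤ × ℤ))
              (minpoly (ZMod 2) (θ : GaloisField 2 w)),
            Polynomial.aeval
              (AddMonoidAlgebra.single ((0 : ℤ), (1 : ℤ)) (1 : ZMod 2) :
                AddMonoidAlgebra (ZMod 2) (ℤ × ℤ))
              (minpoly (ZMod 2) (θ : GaloisField 2 w))}) :
    (a = 0 ∧ b = 0) ∨ 2 ^ w - 1 ≤ a.natAbs + b.natAbs :=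
  statement_8_general w θ hθ a b hmem
end

section
/- (Chamon model ground-state degeneracy.) Let l, m, n ≥ 1 be integers and let S be the F₂-algebra F₂[x^{±1},y^{±1},z^{±1}] / (x + x^{−1} + y + y^{−1}, z + z^{−1} + y + y^{−1}, x^{2l} − 1, y^{2m} − 1, z^{2n} − 1). Then dim_{F₂} S = 8·gcd(l, m, n). -/
open AddMonoidAlgebra

/-- Laurent polynomial ring `F₂[x^{±1}, y^{±1}, z^{±1}]` realized as the group algebra
of `ℤ³` over `F₂`. -/
abbrev LaurentF2 := AddMonoidAlgebra (ZMod 2) (ℤ × ℤ × ℤ)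

/-- The Laurent monomial `x^i y^j z^k`. -/
noncomputable def lmon (i j k : ℤ) : LaurentF2 := AddMonoidAlgebra.single (i, j, k) 1



open Polynomial

lemma lemA {R : Type*} [CommRing R] (h2 : (2:R) = 0) (u v : Rˣ)
    (huv : (u:R) + ↑u⁻¹ + ↑v + ↑v⁻¹ = 0) (k : ℕ) (hu : (u:R)^(2*k) = 1) :
    (v:R)^(2*k) = 1 := by
  have h1 : (u:R) * ↑u⁻¹ = 1 := u.mul_inv
  have h1' : (v:R) * ↑v⁻¹ = 1 := v.mul_inv
  have key : ((u:R) + v) * (1 + u*v) = 0 := by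
    linear_combination ((u:R)*v) * huv + (v:R)*h1 + (u:R)*h1' + ((u:R) + (v:R) - (u:R)*(v:R)*↑u⁻¹ - (u:R)*(v:R)*↑v⁻¹)*h2
  obtain ⟨c1, hc1⟩ : ((u:R) - v) ∣ (u:R)^k - (v:R)^k := sub_dvd_pow_sub_pow _ _ k
  obtain ⟨c2, hc2⟩ : ((u:R)*v - 1) ∣ ((u:R)*v)^k - 1 := by
    simpa using sub_dvd_pow_sub_pow ((u:R)*(v:R)) 1 k
  have key2 : ((u:R)^k - (v:R)^k) * (((u:R)*v)^k - 1) = 0 := by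
    rw [hc1, hc2]
    linear_combination (c1*c2) * key + (-(u:R)*(v:R)^2*c1*c2 - (u:R)*c1*c2)*h2
  have hexp : (u:R)^k * ((v:R)^(2*k) - 1) = 0 := by
    linear_combination -key2 + ((v:R)^k)*(hu) + (-(u:R)^k + (v:R)^k)*h2
  have hu2 : (↑(u^k)⁻¹ : R) * (u:R)^k = 1 := by
    rw [← Units.val_pow_eq_pow_val]; exact (u^k).inv_mul
  linear_combination (↑(u^k)⁻¹ : R) * hexp + ((v:R)^(2*k) - 1) * hu2
    + (-1 + (v:R)^(2*k) - (v:R)^(2*k)*(↑(u^k)⁻¹:R)*(u:R)^k + (↑(u^k)⁻¹:R)*(u:R)^k)*h2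


noncomputable section
variable (g : ℕ)

def p0 : Polynomial (ZMod 2) := X^(2*g) - C 1
abbrev A0 := AdjoinRoot (p0 g)
def a0 : A0 g := AdjoinRoot.root _
def w0 : A0 g := a0 g + (a0 g)^(2*g-1)
def q1 : Polynomial (A0 g) := X^2 + C (w0 g) * X + C 1
abbrev A1 := AdjoinRoot (q1 g)
def y1 : A1 g := AdjoinRoot.root _
def w1 : A1 g := algebraMap (A0 g) (A1 g) (w0 g)
def q2 : Polynomial (A1 g) := X^2 + C (w1 g) * X + C 1
abbrev A2 := AdjoinRoot (q2 g)
def z2 : A2 g := AdjoinRoot.root _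

example : Algebra (ZMod 2) (A1 g) := inferInstance
example : Algebra (ZMod 2) (A2 g) := inferInstance
example : IsScalarTower (ZMod 2) (A0 g) (A1 g) := inferInstance
example : IsScalarTower (ZMod 2) (A1 g) (A2 g) := inferInstance

-- monicity and degrees
lemma p0_monic (hg : 0 < g) : (p0 g).Monic := monic_X_pow_sub_C 1 (by omega)
lemma q1_monic : (q1 g).Monic := by
  have : (C (w0 g) * X + C 1).degree < 2 := lt_of_le_of_lt (by compute_degree) (by norm_num)
  simpa [q1, add_assoc] using monic_X_pow_add (n := 2) (p := C (w0 g) * X + C 1) this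
lemma q2_monic : (q2 g).Monic := by
  have : (C (w1 g) * X + C 1).degree < 2 := lt_of_le_of_lt (by compute_degree) (by norm_num)
  simpa [q2, add_assoc] using monic_X_pow_add (n := 2) (p := C (w1 g) * X + C 1) this
lemma p0_natDegree : (p0 g).natDegree = 2*g := natDegree_X_pow_sub_C
def pb0 (hg : 0 < g) : PowerBasis (ZMod 2) (A0 g) := AdjoinRoot.powerBasis' (p0_monic g hg)

lemma nontrivA0 (hg : 0 < g) : Nontrivial (A0 g) := by
  refine ⟨(pb0 g hg).basis ⟨0, ?_⟩, 0, Module.Basis.ne_zero _ _⟩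
  rw [pb0, AdjoinRoot.powerBasis'_dim, p0_natDegree]; omega

lemma q1_natDegree (hg : 0 < g) : (q1 g).natDegree = 2 := by
  haveI := nontrivA0 g hg
  unfold q1; compute_degree! <;> norm_num

def pb1 (hg : 0 < g) : PowerBasis (A0 g) (A1 g) := AdjoinRoot.powerBasis' (q1_monic g)

lemma nontrivA1 (hg : 0 < g) : Nontrivial (A1 g) := by
  haveI := nontrivA0 g hg
  have e := (pb1 g hg).basis.repr.toEquiv
  have : Nontrivial (Fin (pb1 g hg).dim →₀ A0 g) := by
    haveI : Nonempty (Fin (pb1 g hg).dim) := by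
      refine ⟨⟨0, ?_⟩⟩
      rw [pb1, AdjoinRoot.powerBasis'_dim, q1_natDegree g hg]; omega
    infer_instance
  exact e.nontrivial

lemma q2_natDegree (hg : 0 < g) : (q2 g).natDegree = 2 := by
  haveI := nontrivA1 g hg
  unfold q2; compute_degree! <;> norm_num

def pb2 (hg : 0 < g) : PowerBasis (A1 g) (A2 g) := AdjoinRoot.powerBasis' (q2_monic g)

lemma nontrivA2 (hg : 0 < g) : Nontrivial (A2 g) := by
  haveI := nontrivA1 g hg
  have e := (pb2 g hg).basis.repr.toEquiv
  have : Nontrivial (Fin (pb2 g hg).dim →₀ A1 g) := by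
    haveI : Nonempty (Fin (pb2 g hg).dim) := by
      refine ⟨⟨0, ?_⟩⟩
      rw [pb2, AdjoinRoot.powerBasis'_dim, q2_natDegree g hg]; omega
    infer_instance
  exact e.nontrivial

lemma finrankA2 (hg : 0 < g) : Module.finrank (ZMod 2) (A2 g) = 8 * g := by
  haveI := nontrivA0 g hg
  haveI := nontrivA1 g hg
  haveI : Module.Free (ZMod 2) (A0 g) := Module.Free.of_basis (pb0 g hg).basis
  haveI : Module.Free (A0 g) (A1 g) := Module.Free.of_basis (pb1 g hg).basis
  haveI : Module.Free (A1 g) (A2 g) := Module.Free.of_basis (pb2 g hg).basis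
  have h0 : Module.finrank (ZMod 2) (A0 g) = 2*g := by
    rw [(pb0 g hg).finrank, pb0, AdjoinRoot.powerBasis'_dim, p0_natDegree]
  have h1 : Module.finrank (A0 g) (A1 g) = 2 := by
    rw [(pb1 g hg).finrank, pb1, AdjoinRoot.powerBasis'_dim, q1_natDegree g hg]
  have h2 : Module.finrank (A1 g) (A2 g) = 2 := by
    rw [(pb2 g hg).finrank, pb2, AdjoinRoot.powerBasis'_dim, q2_natDegree g hg]
  have t1 := Module.finrank_mul_finrank (ZMod 2) (A0 g) (A1 g)
  have t2 := Module.finrank_mul_finrank (ZMod 2) (A1 g) (A2 g)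
  rw [← t2, ← t1, h0, h1, h2]; ring

-- root relations
lemma a0_pow : (a0 g)^(2*g) = 1 := by
  have := AdjoinRoot.eval₂_root (p0 g)
  rw [p0, eval₂_sub, eval₂_pow, eval₂_X, eval₂_C, map_one, sub_eq_zero] at this
  exact this
lemma y1_rel : (y1 g)^2 + (w1 g) * (y1 g) + 1 = 0 := by
  have := AdjoinRoot.eval₂_root (q1 g)
  rw [q1, eval₂_add, eval₂_add, eval₂_pow, eval₂_mul, eval₂_X, eval₂_C, eval₂_C, map_one] at this
  exact this
lemma z2_rel : (z2 g)^2 + (algebraMap (A1 g) (A2 g) (w1 g)) * (z2 g) + 1 = 0 := by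
  have := AdjoinRoot.eval₂_root (q2 g)
  rw [q2, eval₂_add, eval₂_add, eval₂_pow, eval₂_mul, eval₂_X, eval₂_C, eval₂_C, map_one] at this
  exact this

lemma two_eq_zero (R : Type*) [CommRing R] [Algebra (ZMod 2) R] : (2:R) = 0 := by
  calc (2:R) = algebraMap (ZMod 2) R 2 := (map_ofNat _ 2).symm
  _ = algebraMap (ZMod 2) R 0 := by rw [show (2:ZMod 2) = 0 from rfl]
  _ = 0 := map_zero _

lemma pow_pred_succ (hg : 0 < g) {R : Type*} [CommRing R] (a : R) :
    a ^ (2*g-1) * a = a ^ (2*g) := by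
  rw [← pow_succ]; congr 1; omega

def ux0 (hg : 0 < g) : (A0 g)ˣ :=
  ⟨a0 g, (a0 g)^(2*g-1),
   by rw [mul_comm, pow_pred_succ g hg, a0_pow],
   by rw [pow_pred_succ g hg, a0_pow]⟩

lemma w0_eq (hg : 0 < g) : w0 g = ↑(ux0 g hg) + ↑(ux0 g hg)⁻¹ := rfl

def uy1 : (A1 g)ˣ :=
  ⟨y1 g, y1 g + w1 g,
   by linear_combination y1_rel g - two_eq_zero (A1 g),
   by linear_combination y1_rel g - two_eq_zero (A1 g)⟩

def w2 : A2 g := algebraMap (A1 g) (A2 g) (w1 g)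

def uz2 : (A2 g)ˣ :=
  ⟨z2 g, z2 g + w2 g,
   by unfold w2; linear_combination z2_rel g - two_eq_zero (A2 g),
   by unfold w2; linear_combination z2_rel g - two_eq_zero (A2 g)⟩

def ux1 (hg : 0 < g) : (A1 g)ˣ := Units.map (algebraMap (A0 g) (A1 g)) (ux0 g hg)

lemma ux1_pow (hg : 0 < g) : (↑(ux1 g hg) : A1 g) ^ (2*g) = 1 := by
  have : (↑(ux1 g hg) : A1 g) = algebraMap (A0 g) (A1 g) (a0 g) := rfl
  rw [this, ← map_pow, a0_pow, map_one]

lemma y1_pow (hg : 0 < g) : (y1 g) ^ (2*g) = 1 := by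
  have h := lemA (two_eq_zero (A1 g)) (ux1 g hg) (uy1 g) ?_ g (ux1_pow g hg)
  · exact h
  · have h1 : (↑(ux1 g hg) : A1 g) = algebraMap (A0 g) (A1 g) (a0 g) := rfl
    have h2 : (↑(ux1 g hg)⁻¹ : A1 g) = algebraMap (A0 g) (A1 g) ((a0 g)^(2*g-1)) := rfl
    have h3 : (↑(uy1 g)⁻¹ : A1 g) = y1 g + w1 g := rfl
    have h4 : (↑(uy1 g) : A1 g) = y1 g := rfl
    rw [h1, h2, h3, h4]
    have h5 : w1 g = algebraMap (A0 g) (A1 g) (a0 g) + algebraMap (A0 g) (A1 g) ((a0 g)^(2*g-1)) := by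
      rw [w1, w0, map_add, map_pow]
    linear_combination h5 + (y1 g + algebraMap (A0 g) (A1 g) (a0 g) + algebraMap (A0 g) (A1 g) ((a0 g)^(2*g-1))) * two_eq_zero (A1 g)

def uy2 : (A2 g)ˣ := Units.map (algebraMap (A1 g) (A2 g)) (uy1 g)
def ux2 (hg : 0 < g) : (A2 g)ˣ := Units.map (algebraMap (A1 g) (A2 g)) (ux1 g hg)

lemma uy2_pow (hg : 0 < g) : (↑(uy2 g) : A2 g) ^ (2*g) = 1 := by
  have : (↑(uy2 g) : A2 g) = algebraMap (A1 g) (A2 g) (y1 g) := rfl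
  rw [this, ← map_pow, y1_pow g hg, map_one]

lemma ux2_pow (hg : 0 < g) : (↑(ux2 g hg) : A2 g) ^ (2*g) = 1 := by
  have : (↑(ux2 g hg) : A2 g) = algebraMap (A1 g) (A2 g) (↑(ux1 g hg)) := rfl
  rw [this, ← map_pow, ux1_pow g hg, map_one]

lemma z2_pow (hg : 0 < g) : (z2 g) ^ (2*g) = 1 := by
  have h := lemA (two_eq_zero (A2 g)) (uy2 g) (uz2 g) ?_ g (uy2_pow g hg)
  · exact h
  · have h1 : (↑(uy2 g) : A2 g) = algebraMap (A1 g) (A2 g) (y1 g) := rfl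
    have h2 : (↑(uy2 g)⁻¹ : A2 g) = algebraMap (A1 g) (A2 g) (y1 g + w1 g) := rfl
    have h3 : (↑(uz2 g)⁻¹ : A2 g) = z2 g + w2 g := rfl
    have h4 : (↑(uz2 g) : A2 g) = z2 g := rfl
    rw [h1, h2, h3, h4, map_add, ← w2]
    linear_combination (z2 g + algebraMap (A1 g) (A2 g) (y1 g) + w2 g) * two_eq_zero (A2 g)

-- the x/y/z sums all equal w2
lemma ux2_sum (hg : 0 < g) : (↑(ux2 g hg) : A2 g) + ↑(ux2 g hg)⁻¹ = w2 g := by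
  have h1 : (↑(ux2 g hg) : A2 g) + ↑(ux2 g hg)⁻¹
      = algebraMap (A1 g) (A2 g) (algebraMap (A0 g) (A1 g) ((a0 g) + (a0 g)^(2*g-1))) := by
    rw [map_add, map_add]; rfl
  rw [h1]; unfold w2 w1 w0; rfl

lemma uy2_sum : (↑(uy2 g) : A2 g) + ↑(uy2 g)⁻¹ = w2 g + algebraMap (A1 g) (A2 g) (2 * y1 g) := by
  have h1 : (↑(uy2 g) : A2 g) = algebraMap (A1 g) (A2 g) (y1 g) := rfl
  have h2 : (↑(uy2 g)⁻¹ : A2 g) = algebraMap (A1 g) (A2 g) (y1 g + w1 g) := rfl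
  rw [h1, h2, ← map_add]; unfold w2; rw [← map_add]; congr 1; ring

lemma uy2_sum' : (↑(uy2 g) : A2 g) + ↑(uy2 g)⁻¹ = w2 g := by
  rw [uy2_sum, two_eq_zero (A1 g), zero_mul, map_zero, add_zero]

lemma uz2_sum : (↑(uz2 g) : A2 g) + ↑(uz2 g)⁻¹ = w2 g := by
  have h3 : (↑(uz2 g)⁻¹ : A2 g) = z2 g + w2 g := rfl
  have h4 : (↑(uz2 g) : A2 g) = z2 g := rfl
  rw [h3, h4]
  linear_combination (z2 g) * two_eq_zero (A2 g)

lemma mulshuffle {G : Type*} [CommGroup G] (x y z : G) (a b c a' b' c' : ℤ) :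
    x^(a+a') * y^(b+b') * z^(c+c') = (x^a*y^b*z^c) * (x^a'*y^b'*z^c') := by
  rw [zpow_add, zpow_add, zpow_add]
  ac_rfl

lemma zpow_zero₃ {G : Type*} [CommGroup G] (x y z : G) :
    x^(0:ℤ) * y^(0:ℤ) * z^(0:ℤ) = 1 := by
  rw [zpow_zero, zpow_zero, zpow_zero, mul_one, mul_one]

def Fmon (hg : 0 < g) : Multiplicative (ℤ × ℤ × ℤ) →* (A2 g)ˣ where
  toFun v := ux2 g hg ^ (Multiplicative.toAdd v).1 * uy2 g ^ (Multiplicative.toAdd v).2.1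
      * uz2 g ^ (Multiplicative.toAdd v).2.2
  map_one' := zpow_zero₃ _ _ _
  map_mul' a b := mulshuffle _ _ _ _ _ _ _ _ _

def phi (hg : 0 < g) : LaurentF2 →ₐ[ZMod 2] A2 g :=
  AddMonoidAlgebra.lift (ZMod 2) (A2 g) (ℤ × ℤ × ℤ) ((Units.coeHom (A2 g)).comp (Fmon g hg))

lemma phi_lmon (hg : 0 < g) (i j k : ℤ) :
    phi g hg (lmon i j k) = ↑(ux2 g hg ^ i * uy2 g ^ j * uz2 g ^ k) := by
  simp only [phi, lmon, AddMonoidAlgebra.lift_single, one_smul]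
  rfl

lemma phi_lmon_x (hg : 0 < g) (i : ℤ) : phi g hg (lmon i 0 0) = ↑(ux2 g hg ^ i) := by
  rw [phi_lmon]
  norm_num

lemma phi_lmon_y (hg : 0 < g) (j : ℤ) : phi g hg (lmon 0 j 0) = ↑(uy2 g ^ j) := by
  rw [phi_lmon]; norm_num

lemma phi_lmon_z (hg : 0 < g) (k : ℤ) : phi g hg (lmon 0 0 k) = ↑(uz2 g ^ k) := by
  rw [phi_lmon]; norm_num

lemma ux2_unit_pow (hg : 0 < g) : (ux2 g hg) ^ (2*g) = 1 :=
  Units.ext (by rw [Units.val_pow_eq_pow_val, ux2_pow g hg, Units.val_one])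

lemma uy2_unit_pow (hg : 0 < g) : (uy2 g) ^ (2*g) = 1 :=
  Units.ext (by rw [Units.val_pow_eq_pow_val, uy2_pow g hg, Units.val_one])

lemma uz2_unit_pow (hg : 0 < g) : (uz2 g) ^ (2*g) = 1 :=
  Units.ext (by rw [Units.val_pow_eq_pow_val]; rw [show ((uz2 g : A2 g)) = z2 g from rfl, z2_pow g hg, Units.val_one])

lemma unit_pow_cast {G : Type*} [CommGroup G] (u : G) (c : ℕ) (h : u ^ (2*g) = 1) (hdvd : g ∣ c) :
    u ^ ((2*c : ℕ) : ℤ) = 1 := by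
  obtain ⟨d, rfl⟩ := hdvd
  rw [zpow_natCast, show 2*(g*d) = 2*g*d by ring, pow_mul, h, one_pow]

lemma phi_gen1 (hg : 0 < g) :
    phi g hg (lmon 1 0 0 + lmon (-1) 0 0 + lmon 0 1 0 + lmon 0 (-1) 0) = 0 := by
  rw [map_add, map_add, map_add, phi_lmon_x, phi_lmon_x, phi_lmon_y, phi_lmon_y]
  rw [zpow_one, zpow_one, zpow_neg_one, zpow_neg_one]
  rw [add_assoc ((ux2 g hg : A2 g) + _), ux2_sum g hg, uy2_sum' g]
  linear_combination (w2 g) * two_eq_zero (A2 g)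

lemma phi_gen2 (hg : 0 < g) :
    phi g hg (lmon 0 0 1 + lmon 0 0 (-1) + lmon 0 1 0 + lmon 0 (-1) 0) = 0 := by
  rw [map_add, map_add, map_add, phi_lmon_z, phi_lmon_z, phi_lmon_y, phi_lmon_y]
  rw [zpow_one, zpow_one, zpow_neg_one, zpow_neg_one]
  rw [add_assoc ((uz2 g : A2 g) + _), uz2_sum g, uy2_sum' g]
  linear_combination (w2 g) * two_eq_zero (A2 g)

lemma phi_genx (hg : 0 < g) (c : ℕ) (hdvd : g ∣ c) :
    phi g hg (lmon (2*c : ℕ) 0 0 - 1) = 0 := by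
  rw [map_sub, map_one, phi_lmon_x, unit_pow_cast g _ c (ux2_unit_pow g hg) hdvd,
    Units.val_one, sub_self]

lemma phi_geny (hg : 0 < g) (c : ℕ) (hdvd : g ∣ c) :
    phi g hg (lmon 0 (2*c : ℕ) 0 - 1) = 0 := by
  rw [map_sub, map_one, phi_lmon_y, unit_pow_cast g _ c (uy2_unit_pow g hg) hdvd,
    Units.val_one, sub_self]

lemma phi_genz (hg : 0 < g) (c : ℕ) (hdvd : g ∣ c) :
    phi g hg (lmon 0 0 (2*c : ℕ) - 1) = 0 := by
  rw [map_sub, map_one, phi_lmon_z, unit_pow_cast g _ c (uz2_unit_pow g hg) hdvd,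
    Units.val_one, sub_self]

lemma phi_mem_x (hg : 0 < g) :
    algebraMap (A1 g) (A2 g) (algebraMap (A0 g) (A1 g) (a0 g)) ∈ (phi g hg).range := by
  refine ⟨lmon 1 0 0, ?_⟩
  show phi g hg (lmon 1 0 0) = _
  rw [phi_lmon_x, zpow_one]; rfl

lemma phi_mem_y (hg : 0 < g) :
    algebraMap (A1 g) (A2 g) (y1 g) ∈ (phi g hg).range := by
  refine ⟨lmon 0 1 0, ?_⟩
  show phi g hg (lmon 0 1 0) = _
  rw [phi_lmon_y, zpow_one]; rfl

lemma phi_mem_z (hg : 0 < g) : z2 g ∈ (phi g hg).range := by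
  refine ⟨lmon 0 0 1, ?_⟩
  show phi g hg (lmon 0 0 1) = _
  rw [phi_lmon_z, zpow_one]; rfl

lemma phi_mem_A0 (hg : 0 < g) (s : A0 g) :
    algebraMap (A1 g) (A2 g) (algebraMap (A0 g) (A1 g) s) ∈ (phi g hg).range := by
  have hs : s ∈ (⊤ : Subalgebra (ZMod 2) (A0 g)) := trivial
  rw [← AdjoinRoot.adjoinRoot_eq_top] at hs
  refine Algebra.adjoin_induction ?_ ?_ ?_ ?_ hs
  · rintro x (rfl : x = AdjoinRoot.root _)
    exact phi_mem_x g hg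
  · intro r
    rw [← IsScalarTower.algebraMap_apply, ← IsScalarTower.algebraMap_apply]
    exact Subalgebra.algebraMap_mem _ r
  · intro x y _ _ hx hy
    rw [map_add, map_add]; exact add_mem hx hy
  · intro x y _ _ hx hy
    rw [map_mul, map_mul]; exact mul_mem hx hy

lemma phi_mem_A1 (hg : 0 < g) (s : A1 g) :
    algebraMap (A1 g) (A2 g) s ∈ (phi g hg).range := by
  have hs : s ∈ (⊤ : Subalgebra (A0 g) (A1 g)) := trivial
  rw [← AdjoinRoot.adjoinRoot_eq_top] at hs
  refine Algebra.adjoin_induction ?_ ?_ ?_ ?_ hs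
  · rintro x (rfl : x = AdjoinRoot.root _)
    exact phi_mem_y g hg
  · intro r
    exact phi_mem_A0 g hg r
  · intro x y _ _ hx hy
    rw [map_add]; exact add_mem hx hy
  · intro x y _ _ hx hy
    rw [map_mul]; exact mul_mem hx hy

lemma phi_surj (hg : 0 < g) : Function.Surjective (phi g hg) := by
  have : ∀ t : A2 g, t ∈ (phi g hg).range := by
    intro t
    have hs : t ∈ (⊤ : Subalgebra (A1 g) (A2 g)) := trivial
    rw [← AdjoinRoot.adjoinRoot_eq_top] at hs
    refine Algebra.adjoin_induction ?_ ?_ ?_ ?_ hs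
    · rintro x (rfl : x = AdjoinRoot.root _)
      exact phi_mem_z g hg
    · intro r
      exact phi_mem_A1 g hg r
    · intro x y _ _ hx hy
      exact add_mem hx hy
    · intro x y _ _ hx hy
      exact mul_mem hx hy
  intro t
  exact this t

section Quot
variable (l m n : ℕ)

def IC : Ideal LaurentF2 :=
  Ideal.span ({lmon 1 0 0 + lmon (-1) 0 0 + lmon 0 1 0 + lmon 0 (-1) 0,
          lmon 0 0 1 + lmon 0 0 (-1) + lmon 0 1 0 + lmon 0 (-1) 0,
          lmon (2 * l) 0 0 - 1,
          lmon 0 (2 * m) 0 - 1,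
          lmon 0 0 (2 * n) - 1} : Set LaurentF2)

abbrev SC := LaurentF2 ⧸ IC l m n

lemma lmon_mul (i j k i' j' k' : ℤ) :
    lmon i j k * lmon i' j' k' = lmon (i+i') (j+j') (k+k') := by
  simp only [lmon, AddMonoidAlgebra.single_mul_single, one_mul]
  rfl

lemma lmon_zero : lmon 0 0 0 = 1 := rfl

def Mk : LaurentF2 →ₐ[ZMod 2] SC l m n := Ideal.Quotient.mkₐ (ZMod 2) (IC l m n)

def XU : (SC l m n)ˣ :=
  ⟨Mk l m n (lmon 1 0 0), Mk l m n (lmon (-1) 0 0),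
   by rw [← map_mul, lmon_mul]; norm_num [lmon_zero],
   by rw [← map_mul, lmon_mul]; norm_num [lmon_zero]⟩

def YU : (SC l m n)ˣ :=
  ⟨Mk l m n (lmon 0 1 0), Mk l m n (lmon 0 (-1) 0),
   by rw [← map_mul, lmon_mul]; norm_num [lmon_zero],
   by rw [← map_mul, lmon_mul]; norm_num [lmon_zero]⟩

def ZU : (SC l m n)ˣ :=
  ⟨Mk l m n (lmon 0 0 1), Mk l m n (lmon 0 0 (-1)),
   by rw [← map_mul, lmon_mul]; norm_num [lmon_zero],
   by rw [← map_mul, lmon_mul]; norm_num [lmon_zero]⟩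

lemma mk_gen_zero (r : LaurentF2) (hr : r ∈ ({lmon 1 0 0 + lmon (-1) 0 0 + lmon 0 1 0 + lmon 0 (-1) 0,
          lmon 0 0 1 + lmon 0 0 (-1) + lmon 0 1 0 + lmon 0 (-1) 0,
          lmon (2 * l) 0 0 - 1,
          lmon 0 (2 * m) 0 - 1,
          lmon 0 0 (2 * n) - 1} : Set LaurentF2)) : Mk l m n r = 0 := by
  have : r ∈ IC l m n := Ideal.subset_span hr
  show Ideal.Quotient.mk (IC l m n) r = 0
  exact (Ideal.Quotient.eq_zero_iff_mem).mpr this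

lemma relxy : (↑(XU l m n) : SC l m n) + ↑(XU l m n)⁻¹ + ↑(YU l m n) + ↑(YU l m n)⁻¹ = 0 := by
  have := mk_gen_zero l m n _ (Set.mem_insert _ _)
  rw [map_add, map_add, map_add] at this
  exact this

lemma relzy : (↑(ZU l m n) : SC l m n) + ↑(ZU l m n)⁻¹ + ↑(YU l m n) + ↑(YU l m n)⁻¹ = 0 := by
  have := mk_gen_zero l m n _ (Set.mem_insert_of_mem _ (Set.mem_insert _ _))
  rw [map_add, map_add, map_add] at this
  exact this

lemma lmon_pow_x (c : ℕ) : (lmon 1 0 0)^c = lmon c 0 0 := by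
  simp [lmon, AddMonoidAlgebra.single_pow]
lemma lmon_pow_y (c : ℕ) : (lmon 0 1 0)^c = lmon 0 c 0 := by
  simp [lmon, AddMonoidAlgebra.single_pow]
lemma lmon_pow_z (c : ℕ) : (lmon 0 0 1)^c = lmon 0 0 c := by
  simp [lmon, AddMonoidAlgebra.single_pow]

lemma xu_pow_l : (XU l m n)^(2*l) = 1 := by
  apply Units.ext
  rw [Units.val_pow_eq_pow_val, Units.val_one]
  show (Mk l m n (lmon 1 0 0))^(2*l) = 1
  rw [← map_pow, lmon_pow_x]
  have := mk_gen_zero l m n _ (Set.mem_insert_of_mem _ (Set.mem_insert_of_mem _ (Set.mem_insert _ _)))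
  rw [map_sub, map_one, sub_eq_zero] at this
  rw [show (((2*l : ℕ) : ℤ)) = 2 * (l:ℤ) by push_cast; ring]
  exact this

lemma yu_pow_m : (YU l m n)^(2*m) = 1 := by
  apply Units.ext
  rw [Units.val_pow_eq_pow_val, Units.val_one]
  show (Mk l m n (lmon 0 1 0))^(2*m) = 1
  rw [← map_pow, lmon_pow_y]
  have := mk_gen_zero l m n _ (Set.mem_insert_of_mem _ (Set.mem_insert_of_mem _ (Set.mem_insert_of_mem _ (Set.mem_insert _ _))))
  rw [map_sub, map_one, sub_eq_zero] at this
  rw [show (((2*m : ℕ) : ℤ)) = 2 * (m:ℤ) by push_cast; ring]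
  exact this

lemma zu_pow_n : (ZU l m n)^(2*n) = 1 := by
  apply Units.ext
  rw [Units.val_pow_eq_pow_val, Units.val_one]
  show (Mk l m n (lmon 0 0 1))^(2*n) = 1
  rw [← map_pow, lmon_pow_z]
  have := mk_gen_zero l m n _ (Set.mem_insert_of_mem _ (Set.mem_insert_of_mem _ (Set.mem_insert_of_mem _ (Set.mem_insert_of_mem _ rfl))))
  rw [map_sub, map_one, sub_eq_zero] at this
  rw [show (((2*n : ℕ) : ℤ)) = 2 * (n:ℤ) by push_cast; ring]
  exact this

end Quot

lemma lemA_units {R : Type*} [CommRing R] (h2 : (2:R) = 0) (u v : Rˣ)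
    (huv : (u:R) + ↑u⁻¹ + ↑v + ↑v⁻¹ = 0) (k : ℕ) (hu : u^(2*k) = 1) : v^(2*k) = 1 := by
  apply Units.ext
  rw [Units.val_pow_eq_pow_val, Units.val_one]
  apply lemA h2 u v huv k
  rw [← Units.val_pow_eq_pow_val, hu, Units.val_one]

lemma unit_gcd {G : Type*} [CommGroup G] (u : G) (a b : ℕ)
    (ha : u^(2*a) = 1) (hb : u^(2*b) = 1) : u^(2*(Nat.gcd a b)) = 1 := by
  have key : u ^ ((2*Nat.gcd a b : ℕ) : ℤ) = 1 := by
    have h := Nat.gcd_eq_gcd_ab a b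
    have e : ((2*Nat.gcd a b : ℕ) : ℤ) = ((2*a : ℕ) : ℤ) * Nat.gcdA a b + ((2*b : ℕ) : ℤ) * Nat.gcdB a b := by
      push_cast [h]; ring
    rw [e, zpow_add, zpow_mul, zpow_mul, zpow_natCast, zpow_natCast, ha, hb, one_zpow, one_zpow, one_mul]
  rw [← zpow_natCast]; exact key

lemma zpow_to_npow {Gp : Type*} [CommGroup Gp] (u : Gp) (N : ℕ) (hN : 0 < N)
    (hu : u^N = 1) (i : ℤ) : ∃ c : ℕ, u^i = u^c := by
  refine ⟨(i % (N:ℤ)).toNat, ?_⟩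
  have h0 : (0:ℤ) ≤ i % (N:ℤ) := Int.emod_nonneg i (by exact_mod_cast hN.ne')
  calc u^i = u^((N:ℤ) * (i / (N:ℤ)) + i % (N:ℤ)) := by rw [Int.mul_ediv_add_emod]
    _ = (u^((N:ℤ)))^(i/(N:ℤ)) * u^(i % (N:ℤ)) := by rw [zpow_add, zpow_mul]
    _ = u^(i % (N:ℤ)) := by rw [zpow_natCast, hu, one_zpow, one_mul]
    _ = u^((i % (N:ℤ)).toNat) := by rw [← zpow_natCast, Int.toNat_of_nonneg h0]

lemma unit_inv_pow {Gp : Type*} [CommGroup Gp] (u : Gp) (N : ℕ) (hN : 0 < N)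
    (h : u^N = 1) : u⁻¹ = u^(N-1) := by
  apply inv_eq_of_mul_eq_one_right
  rw [← pow_succ', show N-1+1 = N by omega, h]

section Quot2
variable (l m n : ℕ)

lemma xu_pow_m : (XU l m n)^(2*m) = 1 :=
  lemA_units (two_eq_zero _) (YU l m n) (XU l m n)
    (by linear_combination relxy l m n) m (yu_pow_m l m n)

lemma yu_pow_n : (YU l m n)^(2*n) = 1 :=
  lemA_units (two_eq_zero _) (ZU l m n) (YU l m n)
    (by linear_combination relzy l m n) n (zu_pow_n l m n)

lemma xu_pow_n : (XU l m n)^(2*n) = 1 :=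
  lemA_units (two_eq_zero _) (YU l m n) (XU l m n)
    (by linear_combination relxy l m n) n (yu_pow_n l m n)

lemma xu_pow_gcd : (XU l m n)^(2*(Nat.gcd l (Nat.gcd m n))) = 1 :=
  unit_gcd (XU l m n) l (Nat.gcd m n) (xu_pow_l l m n)
    (unit_gcd (XU l m n) m n (xu_pow_m l m n) (xu_pow_n l m n))

lemma yu_pow_gcd : (YU l m n)^(2*(Nat.gcd l (Nat.gcd m n))) = 1 :=
  lemA_units (two_eq_zero _) (XU l m n) (YU l m n)
    (relxy l m n) _ (xu_pow_gcd l m n)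

lemma zu_pow_gcd : (ZU l m n)^(2*(Nat.gcd l (Nat.gcd m n))) = 1 :=
  lemA_units (two_eq_zero _) (YU l m n) (ZU l m n)
    (by linear_combination relzy l m n) _ (yu_pow_gcd l m n)

lemma mk_lmon_x (i : ℤ) : Mk l m n (lmon i 0 0) = ↑(XU l m n ^ i) := by
  induction i using Int.induction_on with
  | zero => rw [lmon_zero, map_one, zpow_zero, Units.val_one]
  | succ i ih =>
      have h : lmon ((i:ℤ)+1) 0 0 = lmon i 0 0 * lmon 1 0 0 := by rw [lmon_mul]; norm_num
      rw [h, map_mul, ih, zpow_add_one, Units.val_mul]; rfl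
  | pred i ih =>
      have h : lmon (-(i:ℤ)-1) 0 0 = lmon (-(i:ℤ)) 0 0 * lmon (-1) 0 0 := by rw [lmon_mul]; norm_num [sub_eq_add_neg]
      rw [h, map_mul, ih, zpow_sub_one, Units.val_mul]; rfl

lemma mk_lmon_y (j : ℤ) : Mk l m n (lmon 0 j 0) = ↑(YU l m n ^ j) := by
  induction j using Int.induction_on with
  | zero => rw [lmon_zero, map_one, zpow_zero, Units.val_one]
  | succ j ih =>
      have h : lmon 0 ((j:ℤ)+1) 0 = lmon 0 j 0 * lmon 0 1 0 := by rw [lmon_mul]; norm_num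
      rw [h, map_mul, ih, zpow_add_one, Units.val_mul]; rfl
  | pred j ih =>
      have h : lmon 0 (-(j:ℤ)-1) 0 = lmon 0 (-(j:ℤ)) 0 * lmon 0 (-1) 0 := by rw [lmon_mul]; norm_num [sub_eq_add_neg]
      rw [h, map_mul, ih, zpow_sub_one, Units.val_mul]; rfl

lemma mk_lmon_z (k : ℤ) : Mk l m n (lmon 0 0 k) = ↑(ZU l m n ^ k) := by
  induction k using Int.induction_on with
  | zero => rw [lmon_zero, map_one, zpow_zero, Units.val_one]
  | succ k ih =>
      have h : lmon 0 0 ((k:ℤ)+1) = lmon 0 0 k * lmon 0 0 1 := by rw [lmon_mul]; norm_num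
      rw [h, map_mul, ih, zpow_add_one, Units.val_mul]; rfl
  | pred k ih =>
      have h : lmon 0 0 (-(k:ℤ)-1) = lmon 0 0 (-(k:ℤ)) * lmon 0 0 (-1) := by rw [lmon_mul]; norm_num [sub_eq_add_neg]
      rw [h, map_mul, ih, zpow_sub_one, Units.val_mul]; rfl

lemma mk_lmon (i j k : ℤ) :
    Mk l m n (lmon i j k) = ↑(XU l m n ^ i * YU l m n ^ j * ZU l m n ^ k) := by
  have h : lmon i j k = lmon i 0 0 * lmon 0 j 0 * lmon 0 0 k := by
    rw [lmon_mul, lmon_mul]; norm_num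
  rw [h, map_mul, map_mul, mk_lmon_x, mk_lmon_y, mk_lmon_z, Units.val_mul, Units.val_mul]

def fam : Fin (2*(Nat.gcd l (Nat.gcd m n))) × Fin 2 × Fin 2 → SC l m n :=
  fun p => (↑(XU l m n))^(p.1 : ℕ) * (↑(YU l m n))^((p.2.1 : ℕ)) * (↑(ZU l m n))^((p.2.2 : ℕ))

set_option maxHeartbeats 1000000 in
lemma span_top (hl : 0 < l) :
    Submodule.span (ZMod 2) (Set.range (fam l m n)) = ⊤ := by
  set G := Nat.gcd l (Nat.gcd m n) with hGdef
  have hg : 0 < G := Nat.gcd_pos_of_pos_left _ hl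
  set V := Submodule.span (ZMod 2) (Set.range (fam l m n)) with hV
  set x : SC l m n := ↑(XU l m n) with hx
  set y : SC l m n := ↑(YU l m n) with hy
  set z : SC l m n := ↑(ZU l m n) with hz
  have h2 : (2 : SC l m n) = 0 := two_eq_zero _
  have hx2G : x^(2*G) = 1 := by
    rw [hx, ← Units.val_pow_eq_pow_val, xu_pow_gcd l m n, Units.val_one]
  have hxinv : (↑(XU l m n)⁻¹ : SC l m n) = x^(2*G-1) := by
    rw [unit_inv_pow (XU l m n) (2*G) (by omega) (xu_pow_gcd l m n),
      Units.val_pow_eq_pow_val]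
  have hmulinvx : x * x^(2*G-1) = 1 := by
    rw [← pow_succ', show 2*G-1+1 = 2*G by omega, hx2G]
  have hmulinvy : y * (↑(YU l m n)⁻¹ : SC l m n) = 1 := Units.mul_inv _
  have hmulinvz : z * (↑(ZU l m n)⁻¹ : SC l m n) = 1 := Units.mul_inv _
  have hrel1 : x + x^(2*G-1) + y + (↑(YU l m n)⁻¹ : SC l m n) = 0 := by
    rw [← hxinv]; exact relxy l m n
  have hrel2 : z + (↑(ZU l m n)⁻¹ : SC l m n) + y + (↑(YU l m n)⁻¹ : SC l m n) = 0 :=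
    relzy l m n
  have hyinv : (↑(YU l m n)⁻¹ : SC l m n) = y + x + x^(2*G-1) := by
    linear_combination hrel1 - (y + x + x^(2*G-1)) * h2
  have hysq : y^2 = 1 + (x + x^(2*G-1)) * y := by
    linear_combination (-y) * hrel1 + hmulinvy + (y^2) * h2
  have hzinv : (↑(ZU l m n)⁻¹ : SC l m n) = z + x + x^(2*G-1) := by
    linear_combination hrel2 - hyinv - (z + x + x^(2*G-1) + y) * h2
  have hzsq : z^2 = 1 + (x + x^(2*G-1)) * z := by
    linear_combination (-z) * hrel2 + z * hyinv - hmulinvz + (z^2 + z*(↑(ZU l m n)⁻¹ : SC l m n) + z*y - 1) * h2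
  have claim1 : ∀ i : ℕ, ∀ a b : Fin 2, x^i * y^(a:ℕ) * z^(b:ℕ) ∈ V := by
    intro i
    induction i using Nat.strong_induction_on with
    | _ i IH =>
      intro a b
      by_cases hi : i < 2*G
      · exact Submodule.subset_span ⟨(⟨i, hi⟩, a, b), rfl⟩
      · have hieq : x^i = x^(i-2*G) * x^(2*G) := by
          rw [← pow_add]; congr 1; omega
        rw [hieq, hx2G, mul_one]
        exact IH (i-2*G) (by omega) a b
  have claim2 : ∀ a : ℕ, ∀ i : ℕ, ∀ b : Fin 2, x^i * y^a * z^(b:ℕ) ∈ V := by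
    intro a
    induction a using Nat.strong_induction_on with
    | _ a IH =>
      intro i b
      match a with
      | 0 => exact claim1 i 0 b
      | 1 => exact claim1 i 1 b
      | (j+2) =>
        have e : x^i * y^(j+2) * z^(b:ℕ) = x^i*y^j*z^(b:ℕ) + x^(i+1)*y^(j+1)*z^(b:ℕ)
            + (x^i * x^(2*G-1))*y^(j+1)*z^(b:ℕ) := by
          linear_combination (x^i*y^j*z^(b:ℕ)) * hysq
        rw [e, ← pow_add]
        exact add_mem (add_mem (IH j (by omega) i b) (IH (j+1) (by omega) (i+1) b))
          (IH (j+1) (by omega) (i+(2*G-1)) b)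
  have claim3 : ∀ b a i : ℕ, x^i * y^a * z^b ∈ V := by
    intro b
    induction b using Nat.strong_induction_on with
    | _ b IH =>
      intro a i
      match b with
      | 0 => exact claim2 a i 0
      | 1 => exact claim2 a i 1
      | (j+2) =>
        have e : x^i * y^a * z^(j+2) = x^i*y^a*z^j + (x^(i+1)*y^a)*z^(j+1)
            + ((x^i * x^(2*G-1))*y^a)*z^(j+1) := by
          linear_combination (x^i*y^a*z^j) * hzsq
        rw [e, ← pow_add]
        exact add_mem (add_mem (IH j (by omega) a i) (IH (j+1) (by omega) a (i+1)))
          (IH (j+1) (by omega) a (i+(2*G-1)))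
  have claimZ : ∀ i j k : ℤ, (↑(XU l m n ^ i * YU l m n ^ j * ZU l m n ^ k) : SC l m n) ∈ V := by
    intro i j k
    obtain ⟨ci, hci⟩ := zpow_to_npow (XU l m n) (2*G) (by omega) (xu_pow_gcd l m n) i
    obtain ⟨cj, hcj⟩ := zpow_to_npow (YU l m n) (2*G) (by omega) (yu_pow_gcd l m n) j
    obtain ⟨ck, hck⟩ := zpow_to_npow (ZU l m n) (2*G) (by omega) (zu_pow_gcd l m n) k
    rw [hci, hcj, hck, Units.val_mul, Units.val_mul, Units.val_pow_eq_pow_val,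
      Units.val_pow_eq_pow_val, Units.val_pow_eq_pow_val]
    exact claim3 ck cj ci
  rw [eq_top_iff]
  rintro t -
  obtain ⟨f, rfl⟩ := Ideal.Quotient.mk_surjective t
  show Mk l m n f ∈ V
  induction f using AddMonoidAlgebra.induction_linear with
  | zero => rw [map_zero]; exact zero_mem V
  | add f f' hf hf' => rw [map_add]; exact add_mem hf hf'
  | single v c =>
      have hv : (AddMonoidAlgebra.single v c : LaurentF2) = c • lmon v.1 v.2.1 v.2.2 := by
        rw [lmon, AddMonoidAlgebra.smul_single', mul_one]
      rw [hv, map_smul]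
      exact Submodule.smul_mem V c (by rw [mk_lmon]; exact claimZ _ _ _)
lemma finite_SC (hl : 0 < l) : Module.Finite (ZMod 2) (SC l m n) :=
  ⟨by rw [← span_top l m n hl]; exact Submodule.fg_span (Set.finite_range _)⟩

lemma finrank_SC_le (hl : 0 < l) :
    Module.finrank (ZMod 2) (SC l m n) ≤ 8 * Nat.gcd l (Nat.gcd m n) := by
  have h : Module.finrank (ZMod 2)
      (Submodule.span (ZMod 2) (Set.range (fam l m n))) ≤
      Fintype.card (Fin (2*(Nat.gcd l (Nat.gcd m n))) × Fin 2 × Fin 2) :=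
    finrank_range_le_card (fam l m n)
  rw [span_top l m n hl, finrank_top] at h
  simp only [Fintype.card_prod, Fintype.card_fin] at h
  omega

end Quot2

theorem statement_9' (l m n : ℕ) (hl : 1 ≤ l) (hm : 1 ≤ m) (hn : 1 ≤ n) :
    Module.finrank (ZMod 2) (SC l m n) = 8 * Nat.gcd l (Nat.gcd m n) := by
  set G := Nat.gcd l (Nat.gcd m n) with hGdef
  have hg : 0 < G := Nat.gcd_pos_of_pos_left _ hl
  have hdl : G ∣ l := Nat.gcd_dvd_left _ _
  have hdm : G ∣ m := dvd_trans (Nat.gcd_dvd_right l (Nat.gcd m n)) (Nat.gcd_dvd_left m n)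
  have hdn : G ∣ n := dvd_trans (Nat.gcd_dvd_right l (Nat.gcd m n)) (Nat.gcd_dvd_right m n)
  have hkill : ∀ a ∈ IC l m n, phi G hg a = 0 := by
    have hle : IC l m n ≤ RingHom.ker (phi G hg).toRingHom := by
      rw [IC, Ideal.span_le]
      rintro r hr
      simp only [Set.mem_insert_iff, Set.mem_singleton_iff] at hr
      rw [SetLike.mem_coe, RingHom.mem_ker]
      rcases hr with rfl | rfl | rfl | rfl | rfl
      · exact phi_gen1 G hg
      · exact phi_gen2 G hg
      · rw [show (2 * (l:ℤ)) = ((2*l : ℕ) : ℤ) by push_cast; ring]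
        exact phi_genx G hg l hdl
      · rw [show (2 * (m:ℤ)) = ((2*m : ℕ) : ℤ) by push_cast; ring]
        exact phi_geny G hg m hdm
      · rw [show (2 * (n:ℤ)) = ((2*n : ℕ) : ℤ) by push_cast; ring]
        exact phi_genz G hg n hdn
    intro a ha
    exact hle ha
  let φb : SC l m n →ₐ[ZMod 2] A2 G := Ideal.Quotient.liftₐ (IC l m n) (phi G hg) hkill
  have hsurj : Function.Surjective φb := by
    intro t
    obtain ⟨s, hs⟩ := phi_surj G hg t
    refine ⟨Ideal.Quotient.mk (IC l m n) s, ?_⟩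
    rw [show φb (Ideal.Quotient.mk (IC l m n) s) = phi G hg s from ?_]
    · exact hs
    · show Ideal.Quotient.liftₐ (IC l m n) (phi G hg) hkill _ = _
      rw [Ideal.Quotient.liftₐ_apply]
      rfl
  haveI := finite_SC l m n hl
  have hrange := LinearMap.finrank_range_le (φb.toLinearMap)
  have htop : LinearMap.range φb.toLinearMap = ⊤ := LinearMap.range_eq_top.mpr hsurj
  rw [htop, finrank_top, finrankA2 G hg] at hrange
  have hle2 := finrank_SC_le l m n hl
  omega

end

/-- (Chamon model ground-state degeneracy.)  For integers `l, m, n ≥ 1`, the `F₂`-algebra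
`S = F₂[x^{±1},y^{±1},z^{±1}] / (x + x⁻¹ + y + y⁻¹, z + z⁻¹ + y + y⁻¹,
x^{2l} − 1, y^{2m} − 1, z^{2n} − 1)` has `dim_{F₂} S = 8·gcd(l, m, n)`. -/
theorem statement_9 (l m n : ℕ) (hl : 1 ≤ l) (hm : 1 ≤ m) (hn : 1 ≤ n) :
    Module.finrank (ZMod 2)
      (LaurentF2 ⧸ Ideal.span
        ({lmon 1 0 0 + lmon (-1) 0 0 + lmon 0 1 0 + lmon 0 (-1) 0,
          lmon 0 0 1 + lmon 0 0 (-1) + lmon 0 1 0 + lmon 0 (-1) 0,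
          lmon (2 * l) 0 0 - 1,
          lmon 0 (2 * m) 0 - 1,
          lmon 0 0 (2 * n) - 1} : Set LaurentF2)) =
    8 * Nat.gcd l (Nat.gcd m n) := by
  exact statement_9' l m n hl hm hn
end

section
/- Let R be a GCD domain and f, g ∈ R not both zero, with d = gcd(f,g). Then the kernel of the R-linear map R² → R, (a,b) ↦ f·a + g·b, is the cyclic submodule generated by (g/d, −f/d). -/
/-!
Cancelling the nonzero factor `d = gcd f g` reduces the claim to the coprime pair `f', g'`.
There, `f' a + g' b = 0` forces `g' ∣ f' a`, hence `g' ∣ a`; writing `a = c g'` and cancelling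
`g'` gives `b = -c f'`. When `g' = 0`, coprimality makes `f'` a unit instead.
-/

open LinearMap

section

variable {R : Type*} [CommRing R]

theorem mem_ker_coprod_toSpanSingleton_iff (f g : R) (x : R × R) :
    x ∈ ker (coprod (toSpanSingleton R R f) (toSpanSingleton R R g)) ↔
      f * x.1 + g * x.2 = 0 := by
  simp only [mem_ker, coprod_apply, toSpanSingleton_apply, smul_eq_mul, mul_comm]

theorem ker_coprod_toSpanSingleton_of_eq_mul [NoZeroDivisors R] {d f g f' g' : R}
    (hd : d ≠ 0) (hf : f = d * f') (hg : g = d * g') :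
    ker (coprod (toSpanSingleton R R f) (toSpanSingleton R R g)) =
      ker (coprod (toSpanSingleton R R f') (toSpanSingleton R R g')) := by
  ext x
  simp only [mem_ker_coprod_toSpanSingleton_iff, hf, hg, mul_assoc, ← mul_add,
    mul_eq_zero, hd, false_or]

theorem ker_coprod_toSpanSingleton_of_isRelPrime [IsDomain R] [DecompositionMonoid R]
    {f g : R} (h : IsRelPrime f g) :
    ker (coprod (toSpanSingleton R R f) (toSpanSingleton R R g)) =
      Submodule.span R {((g, -f) : R × R)} := by
  refine le_antisymm ?_ ?_
  · rintro ⟨a, b⟩ hab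
    rw [mem_ker_coprod_toSpanSingleton_iff] at hab
    rw [Submodule.mem_span_singleton]
    by_cases hg : g = 0
    · subst hg
      obtain ⟨u, rfl⟩ := isRelPrime_zero_right.1 h
      have ha : a = 0 := by simpa using hab
      exact ⟨-(b * ↑u⁻¹), by simp [ha]⟩
    · obtain ⟨c, rfl⟩ : g ∣ a := h.symm.dvd_of_dvd_mul_left ⟨-b, by linear_combination hab⟩
      have hb : b = -(c * f) := by
        have : g * (b + c * f) = 0 := by linear_combination hab
        linear_combination (mul_eq_zero.1 this).resolve_left hg
      exact ⟨c, by simp [hb, mul_comm]⟩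
  · rw [Submodule.span_singleton_le_iff_mem, mem_ker_coprod_toSpanSingleton_iff]
    ring

end

/-- Let `R` be a GCD domain, `f, g ∈ R` not both zero, `d = gcd(f,g)`, and write
`f = d·f'`, `g = d·g'`.  Then the kernel of the map `R² → R`, `(a,b) ↦ f·a + g·b`,
is the cyclic submodule generated by `(g', −f') = (g/d, −f/d)`. -/
theorem statement_11 (R : Type*) [CommRing R] [IsDomain R] [GCDMonoid R]
    (f g : R) (hfg : ¬(f = 0 ∧ g = 0)) (f' g' : R)
    (hf : f = gcd f g * f') (hg : g = gcd f g * g') :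
    LinearMap.ker
        (LinearMap.coprod (LinearMap.toSpanSingleton R R f)
          (LinearMap.toSpanSingleton R R g)) =
      Submodule.span R {((g', -f') : R × R)} := by
  have hd : gcd f g ≠ 0 := mt (gcd_eq_zero_iff f g).1 hfg
  rw [ker_coprod_toSpanSingleton_of_eq_mul hd hf hg]
  exact ker_coprod_toSpanSingleton_of_isRelPrime
    (gcd_isUnit_iff_isRelPrime.1 (isUnit_gcd_of_eq_mul_gcd hf hg hd))
end

section
/- Fix a real constant ξ(p) = (10α)^p for some α ≥ 1 and each integer p ≥ 0. Call a finite nonempty set S of points in a metric space 'sparse at level p' if S can be partitioned into nonempty clusters each of diameter at most ξ(p) such that the union of any two distinct clusters has diameter greater than ξ(p+1); otherwise S is 'non-sparse at level p'. If a finite nonempty set S is non-sparse at every level q = 0, 1, …, p, then S contains at least p + 2 points. -/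
/-!
Start from the partition of `S` into singletons, which has `|S|` clusters of diameter
`0 ≤ ξ(0)`. If `S` is non-sparse at level `q` and we hold a partition into clusters of
diameter at most `ξ(q)`, then two distinct clusters have a union of diameter at most
`ξ(q+1)`; merging them yields a partition into clusters of diameter at most `ξ(q+1)`
(as `ξ` is nondecreasing) with one cluster fewer. After the levels `0, …, p - 1` at most
`|S| - p` clusters remain, and non-sparseness at level `p` still needs two of them.
-/

/-- `S` is sparse at level `q` (with unit length `ξ(q) = (10α)^q`): `S` can be
partitioned into nonempty clusters, each of diameter at most `(10α)^q`, such that the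
union of any two distinct clusters has diameter greater than `(10α)^{q+1}`. -/
def SparseAtLevel {X : Type*} [MetricSpace X] [DecidableEq X] (α : ℝ)
    (S : Finset X) (q : ℕ) : Prop :=
  ∃ P : Finset (Finset X),
    (∀ C ∈ P, C.Nonempty) ∧
    (∀ C ∈ P, ∀ D ∈ P, C ≠ D → Disjoint C D) ∧
    P.biUnion id = S ∧
    (∀ C ∈ P, Metric.diam (C : Set X) ≤ (10 * α) ^ q) ∧
    (∀ C ∈ P, ∀ D ∈ P, C ≠ D →
      Metric.diam ((C : Set X) ∪ (D : Set X)) > (10 * α) ^ (q + 1))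

open Finset

section Partition

variable {β : Type*} [DecidableEq β]

structure IsPartitionOf (P : Finset (Finset β)) (S : Finset β) : Prop where
  nonempty : ∀ C ∈ P, C.Nonempty
  disjoint : ∀ C ∈ P, ∀ D ∈ P, C ≠ D → Disjoint C D
  biUnion_eq : P.biUnion id = S

theorem isPartitionOf_image_singleton (S : Finset β) :
    IsPartitionOf (S.image ({·} : β → Finset β)) S where
  nonempty := by
    simp only [mem_image]
    rintro _ ⟨x, -, rfl⟩
    exact singleton_nonempty x
  disjoint := by
    simp only [mem_image]
    rintro _ ⟨x, -, rfl⟩ _ ⟨y, -, rfl⟩ hxy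
    exact disjoint_singleton.2 (ne_of_apply_ne _ hxy)
  biUnion_eq := by
    ext x
    simp

theorem Finset.insert_insert_erase_erase {P : Finset β} {C D : β} (hC : C ∈ P) (hD : D ∈ P)
    (hCD : C ≠ D) : insert C (insert D ((P.erase C).erase D)) = P := by
  rw [insert_erase (mem_erase_of_ne_of_mem hCD.symm hD), insert_erase hC]

def mergeParts (P : Finset (Finset β)) (C D : Finset β) : Finset (Finset β) :=
  insert (C ∪ D) ((P.erase C).erase D)

variable {P : Finset (Finset β)} {S C D E : Finset β}

theorem mem_mergeParts : E ∈ mergeParts P C D ↔ E = C ∪ D ∨ E ≠ D ∧ E ≠ C ∧ E ∈ P := by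
  simp only [mergeParts, mem_insert, mem_erase]

theorem IsPartitionOf.mergeParts (hP : IsPartitionOf P S) (hC : C ∈ P) (hD : D ∈ P)
    (hCD : C ≠ D) : IsPartitionOf (mergeParts P C D) S := by
  have disjoint_union : ∀ E ∈ P, E ≠ D → E ≠ C → Disjoint (C ∪ D) E := fun E hE hED hEC ↦
    disjoint_union_left.2
      ⟨hP.disjoint C hC E hE (Ne.symm hEC), hP.disjoint D hD E hE (Ne.symm hED)⟩
  refine ⟨?_, ?_, ?_⟩
  · intro E hE
    obtain rfl | ⟨-, -, hE⟩ := mem_mergeParts.1 hE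
    exacts [(hP.nonempty C hC).mono subset_union_left, hP.nonempty E hE]
  · intro E hE F hF hEF
    rcases mem_mergeParts.1 hE, mem_mergeParts.1 hF with
      ⟨rfl | ⟨hED, hEC, hE⟩, rfl | ⟨hFD, hFC, hF⟩⟩
    exacts [absurd rfl hEF, disjoint_union F hF hFD hFC, (disjoint_union E hE hED hEC).symm,
      hP.disjoint E hE F hF hEF]
  · rw [← hP.biUnion_eq]
    conv_rhs => rw [← insert_insert_erase_erase hC hD hCD]
    simp only [_root_.mergeParts, biUnion_insert, id, union_assoc]

theorem card_mergeParts_add_one_le (hC : C ∈ P) (hD : D ∈ P) (hCD : C ≠ D) :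
    (mergeParts P C D).card + 1 ≤ P.card := by
  have hP := congrArg card (insert_insert_erase_erase hC hD hCD)
  rw [card_insert_of_notMem (by simp [hCD]), card_insert_of_notMem (by simp)] at hP
  have := card_insert_le (C ∪ D) ((P.erase C).erase D)
  rw [mergeParts]
  omega

end Partition

section Sparse

variable {X : Type*} [MetricSpace X] [DecidableEq X] {α : ℝ} {S : Finset X}

theorem exists_ne_diam_union_le_of_not_sparseAtLevel {q : ℕ} (hS : ¬ SparseAtLevel α S q)
    {P : Finset (Finset X)} (hP : IsPartitionOf P S)
    (hdiam : ∀ C ∈ P, Metric.diam (C : Set X) ≤ (10 * α) ^ q) :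
    ∃ C ∈ P, ∃ D ∈ P, C ≠ D ∧ Metric.diam ((C ∪ D : Finset X) : Set X) ≤ (10 * α) ^ (q + 1) := by
  by_contra! h
  simp only [coe_union] at h
  exact hS ⟨P, hP.nonempty, hP.disjoint, hP.biUnion_eq, hdiam, h⟩

theorem exists_isPartitionOf_card_add_le (hα : 1 ≤ α) (q : ℕ)
    (hS : ∀ q' < q, ¬ SparseAtLevel α S q') :
    ∃ P, IsPartitionOf P S ∧ (∀ C ∈ P, Metric.diam (C : Set X) ≤ (10 * α) ^ q) ∧
      P.card + q ≤ S.card := by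
  induction q with
  | zero =>
    refine ⟨S.image singleton, isPartitionOf_image_singleton S, ?_, ?_⟩
    · simp
    · simp [card_image_of_injective S singleton_injective]
  | succ q ih =>
    obtain ⟨P, hP, hdiam, hcard⟩ := ih fun q' hq' ↦ hS q' (by omega)
    obtain ⟨C, hC, D, hD, hCD, hCD_diam⟩ :=
      exists_ne_diam_union_le_of_not_sparseAtLevel (hS q (by omega)) hP hdiam
    have hmono : (10 * α) ^ q ≤ (10 * α) ^ (q + 1) :=
      pow_le_pow_right₀ (by linarith) q.le_succ
    refine ⟨_, hP.mergeParts hC hD hCD, ?_, ?_⟩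
    · intro E hE
      obtain rfl | ⟨-, -, hE⟩ := mem_mergeParts.1 hE
      exacts [hCD_diam, (hdiam E hE).trans hmono]
    · have := card_mergeParts_add_one_le hC hD hCD
      omega

end Sparse

theorem statement_16_general {X : Type*} [MetricSpace X] [DecidableEq X] (α : ℝ) (hα : 1 ≤ α)
    (S : Finset X) (p : ℕ)
    (hns : ∀ q ≤ p, ¬ SparseAtLevel α S q) :
    p + 2 ≤ S.card := by
  obtain ⟨P, hP, hdiam, hcard⟩ :=
    exists_isPartitionOf_card_add_le hα p fun q hq ↦ hns q hq.le
  obtain ⟨C, hC, D, hD, hCD, -⟩ :=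
    exists_ne_diam_union_le_of_not_sparseAtLevel (hns p le_rfl) hP hdiam
  have : 1 < P.card := one_lt_card.2 ⟨C, hC, D, hD, hCD⟩
  omega

/-- If a finite nonempty set `S` in a metric space is non-sparse at every level
`q = 0, 1, …, p`, then `S` contains at least `p + 2` points. -/
theorem statement_16 {X : Type*} [MetricSpace X] [DecidableEq X] (α : ℝ) (hα : 1 ≤ α)
    (S : Finset X) (hS : S.Nonempty) (p : ℕ)
    (hns : ∀ q ≤ p, ¬ SparseAtLevel α S q) :
    p + 2 ≤ S.card :=
  statement_16_general α hα S p hns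
end

section
/- Let F be an algebraically closed field of characteristic 2 and ω ∈ F with ω² + ω + 1 = 0. Then (a,b,c) ∈ F³ satisfies the two equations 1 + a + b + c = 0 and 1 + ab + bc + ca = 0 if and only if there exists t ∈ F such that (a,b,c) = (1+t, 1+ωt, 1+ω²t) or (a,b,c) = (1+t, 1+ω²t, 1+ωt). In other words, the affine variety defined by these two equations is the union of two lines through (1,1,1). -/
/-!
Shifting by `(1,1,1)` turns the two equations, in characteristic 2, into the vanishing of the
first two elementary symmetric functions of `(x,y,z) = (a+1,b+1,c+1)`. Eliminating
`z = -x - y` leaves `x² + xy + y² = (y - ωx)(y - ω²x) = 0`, so `y = ωx` or `y = ω²x`.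
-/

section CubeRootOfUnity

variable {R : Type*} [CommRing R] {ω : R}

theorem sq_add_mul_add_sq_eq_mul_of_sq_add_add_one (hω : ω ^ 2 + ω + 1 = 0) (x y : R) :
    x ^ 2 + x * y + y ^ 2 = (y - ω * x) * (y - ω ^ 2 * x) := by
  linear_combination (x * y - (ω - 1) * x ^ 2) * hω

theorem add_add_eq_zero_and_mul_add_mul_add_mul_eq_zero_iff [IsDomain R]
    (hω : ω ^ 2 + ω + 1 = 0) (x y z : R) :
    (x + y + z = 0 ∧ x * y + y * z + z * x = 0) ↔
      ∃ t : R, (x = t ∧ y = ω * t ∧ z = ω ^ 2 * t) ∨ (x = t ∧ y = ω ^ 2 * t ∧ z = ω * t) := by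
  constructor
  · rintro ⟨hsum, hprod⟩
    obtain rfl : z = -x - y := by linear_combination hsum
    have hfactor : (y - ω * x) * (y - ω ^ 2 * x) = 0 := by
      rw [← sq_add_mul_add_sq_eq_mul_of_sq_add_add_one hω]
      linear_combination -hprod
    refine ⟨x, ?_⟩
    rcases mul_eq_zero.mp hfactor with h | h
    · exact Or.inl ⟨rfl, by linear_combination h, by linear_combination -h - x * hω⟩
    · exact Or.inr ⟨rfl, by linear_combination h, by linear_combination -h - x * hω⟩
  · rintro ⟨t, ⟨hx, hy, hz⟩ | ⟨hx, hy, hz⟩⟩ <;> rw [hx, hy, hz] <;>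
      exact ⟨by linear_combination t * hω, by linear_combination t ^ 2 * ω * hω⟩

end CubeRootOfUnity

namespace CharTwo

variable {R : Type*} [CommRing R] [CharP R 2]

theorem one_add_add_add_eq (a b c : R) :
    1 + a + b + c = (a + 1) + (b + 1) + (c + 1) := by
  linear_combination -two_eq_zero (R := R)

theorem one_add_mul_add_mul_add_mul_eq (a b c : R) :
    1 + a * b + b * c + c * a = (a + 1) * (b + 1) + (b + 1) * (c + 1) + (c + 1) * (a + 1) := by
  linear_combination -(1 + a + b + c) * two_eq_zero (R := R)

end CharTwo

theorem statement_18_general (F : Type*) [Field F] [CharP F 2]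
    (ω : F) (hω : ω ^ 2 + ω + 1 = 0) (a b c : F) :
    (1 + a + b + c = 0 ∧ 1 + a * b + b * c + c * a = 0) ↔
      ∃ t : F, (a = 1 + t ∧ b = 1 + ω * t ∧ c = 1 + ω ^ 2 * t) ∨
        (a = 1 + t ∧ b = 1 + ω ^ 2 * t ∧ c = 1 + ω * t) := by
  rw [CharTwo.one_add_add_add_eq, CharTwo.one_add_mul_add_mul_add_mul_eq,
    add_add_eq_zero_and_mul_add_mul_add_mul_eq_zero_iff hω]
  have shift (u v : F) : u + 1 = v ↔ u = 1 + v := by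
    rw [CharTwo.add_eq_iff_eq_add, add_comm]
  simp only [shift]

/-- Let `F` be an algebraically closed field of characteristic 2 and `ω ∈ F` with
`ω² + ω + 1 = 0`.  Then `(a,b,c)` satisfies `1 + a + b + c = 0` and
`1 + ab + bc + ca = 0` if and only if `(a,b,c) = (1+t, 1+ωt, 1+ω²t)` or
`(a,b,c) = (1+t, 1+ω²t, 1+ωt)` for some `t ∈ F`: the variety is the union of two
lines through `(1,1,1)`. -/
theorem statement_18 (F : Type*) [Field F] [IsAlgClosed F] [CharP F 2]
    (ω : F) (hω : ω ^ 2 + ω + 1 = 0) (a b c : F) :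
    (1 + a + b + c = 0 ∧ 1 + a * b + b * c + c * a = 0) ↔
      ∃ t : F, (a = 1 + t ∧ b = 1 + ω * t ∧ c = 1 + ω ^ 2 * t) ∨
        (a = 1 + t ∧ b = 1 + ω ^ 2 * t ∧ c = 1 + ω * t) :=
  statement_18_general F ω hω a b c
end
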